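/- arXiv:math/0402383 — 2 statements merged into one kernel-verified Lean document; each statement's English description precedes it below -/
import Mathlib

section
/- For a monomial matrix v ∈ N, the element e_μ v e_μ of ℂ[G] is nonzero if and only if v ∈ N_μ; moreover the family (e_μ v e_μ)_{v ∈ N_μ} is a ℂ-vector space basis of the unipotent Hecke algebra H_μ = e_μ ℂ[G] e_μ. -/
open Matrix MonoidAlgebra

/-- `g` is upper triangular with all diagonal entries `1` (unipotent upper triangular). -/
def IsUU {F : Type} [Field F] {n : ℕ} (g : Matrix (Fin n) (Fin n) F) : Prop :=
  (∀ i j : Fin n, j < i → g i j = 0) ∧ (∀ i : Fin n, g i i = 1)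

instance {F : Type} [Field F] [DecidableEq F] {n : ℕ} (g : Matrix (Fin n) (Fin n) F) :
    Decidable (IsUU g) :=
  @decidable_of_iff ((∀ i j : Fin n, j < i → g i j = 0) ∧ (∀ i : Fin n, g i i = 1)) _ Iff.rfl
    (@instDecidableAnd _ _
      (@Fintype.decidableForallFintype _ _
        (fun i => @Fintype.decidableForallFintype _ _ (fun _ => inferInstance) _) _)
      inferInstance)

/-- The set `B_μ = {μ₁, μ₁+μ₂, …, μ₁+⋯+μ_ℓ}` of partial sums of the composition `μ`. -/
def Bset (μ : List ℕ) : Finset ℕ :=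
  (Finset.range μ.length).image fun k => (μ.take (k + 1)).sum

/-- The linear character `ψ_μ` of `U`, as a function on all of `GL n F`:
`ψ_μ(u) = ψ(Σ u_{i,i+1})`, where the sum runs over the superdiagonal positions whose
(1-based) row index `i` satisfies `i ∉ B_μ`. -/
noncomputable def psiMu {F : Type} [Field F] [Fintype F] [DecidableEq F]
    (ψ : AddChar F ℂ) (n : ℕ) (μ : List ℕ) (g : GL (Fin n) F) : ℂ :=
  ψ (∑ p : Fin n × Fin n,
      if (p.1 : ℕ) + 1 = (p.2 : ℕ) ∧ (p.1 : ℕ) + 1 ∉ Bset μ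
      then (g : Matrix (Fin n) (Fin n) F) p.1 p.2 else 0)

/-- The subgroup `U` of unipotent upper triangular matrices, as a finset of `GL n F`. -/
noncomputable def Uset (F : Type) [Field F] [Fintype F] [DecidableEq F] (n : ℕ) :
    Finset (GL (Fin n) F) :=
  Finset.univ.filter fun g => IsUU (g : Matrix (Fin n) (Fin n) F)

/-- The idempotent `e_μ = (1/|U|) Σ_{u ∈ U} ψ_μ(u⁻¹) u` of the group algebra `ℂ[GL n F]`. -/
noncomputable def eMu {F : Type} [Field F] [Fintype F] [DecidableEq F]
    (ψ : AddChar F ℂ) (n : ℕ) (μ : List ℕ) : MonoidAlgebra ℂ (GL (Fin n) F) :=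
  ((Uset F n).card : ℂ)⁻¹ • ∑ u ∈ Uset F n, MonoidAlgebra.single u (psiMu ψ n μ u⁻¹)

/-- A matrix is monomial when it has exactly one nonzero entry in each row and column. -/
def IsMonomialMat {F : Type} [Field F] {n : ℕ} (g : Matrix (Fin n) (Fin n) F) : Prop :=
  (∀ i : Fin n, ∃! j : Fin n, g i j ≠ 0) ∧ (∀ j : Fin n, ∃! i : Fin n, g i j ≠ 0)

/-- The set `N_μ` of monomial matrices `v` such that whenever `u, vuv⁻¹ ∈ U` one has
`ψ_μ(u) = ψ_μ(vuv⁻¹)`. -/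
noncomputable def Nmu {F : Type} [Field F] [Fintype F] [DecidableEq F]
    (ψ : AddChar F ℂ) (n : ℕ) (μ : List ℕ) : Set (GL (Fin n) F) :=
  {v | IsMonomialMat (v : Matrix (Fin n) (Fin n) F) ∧
    ∀ u : GL (Fin n) F, IsUU (u : Matrix (Fin n) (Fin n) F) →
      IsUU ((v * u * v⁻¹ : GL (Fin n) F) : Matrix (Fin n) (Fin n) F) →
      psiMu ψ n μ u = psiMu ψ n μ (v * u * v⁻¹)}

/-- The set `M_μ` of `ℓ×ℓ` matrices of monic polynomials with nonzero constant term whose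
degree row sums and degree column sums are both equal to `μ`. -/
def Mmu (F : Type) [Field F] (μ : List ℕ) :
    Set (Matrix (Fin μ.length) (Fin μ.length) (Polynomial F)) :=
  {a | (∀ i j, (a i j).Monic ∧ Polynomial.eval 0 (a i j) ≠ 0) ∧
       (∀ i, (∑ j, (a i j).natDegree) = μ.get i) ∧
       (∀ j, (∑ i, (a i j).natDegree) = μ.get j)}

/-- The unipotent Hecke algebra `H_μ = e_μ ℂ[G] e_μ` as a subspace of the group algebra. -/
noncomputable def Hsub {F : Type} [Field F] [Fintype F] [DecidableEq F] {n : ℕ}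
    (e : MonoidAlgebra ℂ (GL (Fin n) F)) : Submodule ℂ (MonoidAlgebra ℂ (GL (Fin n) F)) :=
  LinearMap.range ((LinearMap.mulLeft ℂ e).comp (LinearMap.mulRight ℂ e))

set_option linter.unusedSectionVars false
set_option linter.unusedVariables false
section Basics
variable {F : Type} [Field F] [Fintype F] [DecidableEq F] {n : ℕ}

lemma isUU_one : IsUU (1 : Matrix (Fin n) (Fin n) F) :=
  ⟨fun i j h => Matrix.one_apply_ne (Ne.symm (ne_of_lt h)), fun i => Matrix.one_apply_eq i⟩

lemma isUU_mul {A B : Matrix (Fin n) (Fin n) F} (hA : IsUU A) (hB : IsUU B) :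
    IsUU (A * B) := by
  constructor
  · intro i j hji
    rw [Matrix.mul_apply]
    apply Finset.sum_eq_zero
    intro k _
    rcases lt_or_ge k i with hk | hk
    · rw [hA.1 i k hk, zero_mul]
    · rw [hB.1 k j (lt_of_lt_of_le hji hk), mul_zero]
  · intro i
    rw [Matrix.mul_apply]
    rw [Finset.sum_eq_single i]
    · rw [hA.2, hB.2, one_mul]
    · intro k _ hk
      rcases lt_or_ge k i with h | h
      · rw [hA.1 i k h, zero_mul]
      · rw [hB.1 k i (lt_of_le_of_ne h (Ne.symm hk)), mul_zero]
    · intro h; exact absurd (Finset.mem_univ i) h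

lemma superdiag_mul {A B : Matrix (Fin n) (Fin n) F} (hA : IsUU A) (hB : IsUU B)
    {i j : Fin n} (h : (i : ℕ) + 1 = (j : ℕ)) : (A * B) i j = A i j + B i j := by
  have hij : i < j := by rw [Fin.lt_def]; omega
  have hne : i ≠ j := ne_of_lt hij
  rw [Matrix.mul_apply]
  rw [← Finset.sum_subset (Finset.subset_univ ({i, j} : Finset (Fin n)))]
  · rw [Finset.sum_pair hne, hA.2, hB.2, one_mul, mul_one, add_comm]
  · intro k _ hk
    simp only [Finset.mem_insert, Finset.mem_singleton, not_or] at hk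
    rcases lt_or_ge k i with h1 | h1
    · rw [hA.1 i k h1, zero_mul]
    · have : j < k := by
        rw [Fin.lt_def]
        have h2 : (i : ℕ) < (k : ℕ) := lt_of_le_of_ne h1 (by
          intro hh; exact hk.1 (Fin.ext hh.symm))
        have h3 : (k : ℕ) ≠ (j : ℕ) := fun hh => hk.2 (Fin.ext hh)
        omega
      rw [hB.1 k j this, mul_zero]

/-- The superdiagonal sum entering `psiMu`. -/
def sdSum (μ : List ℕ) (A : Matrix (Fin n) (Fin n) F) : F :=
  ∑ p : Fin n × Fin n,
    if (p.1 : ℕ) + 1 = (p.2 : ℕ) ∧ (p.1 : ℕ) + 1 ∉ Bset μ then A p.1 p.2 else 0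

lemma psiMu_def (ψ : AddChar F ℂ) (μ : List ℕ) (g : GL (Fin n) F) :
    psiMu ψ n μ g = ψ (sdSum μ (g : Matrix (Fin n) (Fin n) F)) := rfl

lemma sdSum_one (μ : List ℕ) : sdSum μ (1 : Matrix (Fin n) (Fin n) F) = 0 := by
  apply Finset.sum_eq_zero
  intro p _
  split_ifs with h
  · refine Matrix.one_apply_ne ?_
    intro hh
    have := congrArg Fin.val hh
    omega
  · rfl

lemma sdSum_mul {μ : List ℕ} {A B : Matrix (Fin n) (Fin n) F} (hA : IsUU A) (hB : IsUU B) :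
    sdSum μ (A * B) = sdSum μ A + sdSum μ B := by
  unfold sdSum
  rw [← Finset.sum_add_distrib]
  apply Finset.sum_congr rfl
  intro p _
  split_ifs with h
  · exact superdiag_mul hA hB h.1
  · rw [add_zero]

end Basics
section Groupy
variable {F : Type} [Field F] [Fintype F] [DecidableEq F] {n : ℕ}

lemma mem_Uset {g : GL (Fin n) F} :
    g ∈ Uset F n ↔ IsUU (g : Matrix (Fin n) (Fin n) F) := by
  simp [Uset]

lemma one_mem_Uset : (1 : GL (Fin n) F) ∈ Uset F n := by
  rw [mem_Uset, Units.val_one]; exact isUU_one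

lemma Uset_card_ne_zero : ((Uset F n).card : ℂ) ≠ 0 := by
  have h : (Uset F n).Nonempty := ⟨1, one_mem_Uset⟩
  exact Nat.cast_ne_zero.mpr (Finset.card_pos.mpr h).ne'

lemma mul_mem_Uset {g h : GL (Fin n) F} (hg : g ∈ Uset F n) (hh : h ∈ Uset F n) :
    g * h ∈ Uset F n := by
  rw [mem_Uset] at *
  rw [Units.val_mul]
  exact isUU_mul hg hh

lemma pow_mem_Uset {g : GL (Fin n) F} (hg : g ∈ Uset F n) (m : ℕ) :
    g ^ m ∈ Uset F n := by
  induction m with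
  | zero => simpa using one_mem_Uset
  | succ k ih => rw [pow_succ]; exact mul_mem_Uset ih hg

lemma inv_mem_Uset {g : GL (Fin n) F} (hg : g ∈ Uset F n) : g⁻¹ ∈ Uset F n := by
  have hord : 0 < orderOf g := orderOf_pos g
  have h1 : g * g ^ (orderOf g - 1) = 1 := by
    rw [← pow_succ', Nat.sub_add_cancel hord, pow_orderOf_eq_one]
  rw [inv_eq_of_mul_eq_one_right h1]
  exact pow_mem_Uset hg _

lemma isUU_inv {g : GL (Fin n) F} (hg : IsUU (g : Matrix (Fin n) (Fin n) F)) :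
    IsUU ((g⁻¹ : GL (Fin n) F) : Matrix (Fin n) (Fin n) F) :=
  mem_Uset.mp (inv_mem_Uset (mem_Uset.mpr hg))

variable (ψ : AddChar F ℂ) (μ : List ℕ)

lemma psiMu_one : psiMu ψ n μ 1 = 1 := by
  rw [psiMu_def, Units.val_one, sdSum_one, AddChar.map_zero_eq_one]

lemma psiMu_mul {u w : GL (Fin n) F} (hu : IsUU (u : Matrix (Fin n) (Fin n) F))
    (hw : IsUU (w : Matrix (Fin n) (Fin n) F)) :
    psiMu ψ n μ (u * w) = psiMu ψ n μ u * psiMu ψ n μ w := by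
  rw [psiMu_def, psiMu_def, psiMu_def, Units.val_mul, sdSum_mul hu hw,
    AddChar.map_add_eq_mul]

lemma psiMu_ne_zero (g : GL (Fin n) F) : psiMu ψ n μ g ≠ 0 := by
  rw [psiMu_def]
  intro h0
  have := (AddChar.map_add_eq_mul ψ (sdSum μ (g : Matrix (Fin n) (Fin n) F))
    (-(sdSum μ (g : Matrix (Fin n) (Fin n) F))))
  rw [add_neg_cancel, AddChar.map_zero_eq_one, h0, zero_mul] at this
  exact one_ne_zero this

lemma psiMu_inv {u : GL (Fin n) F} (hu : IsUU (u : Matrix (Fin n) (Fin n) F)) :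
    psiMu ψ n μ u⁻¹ = (psiMu ψ n μ u)⁻¹ := by
  have h1 : psiMu ψ n μ u * psiMu ψ n μ u⁻¹ = 1 := by
    rw [← psiMu_mul ψ μ hu (isUU_inv hu), mul_inv_cancel, psiMu_one]
  exact (eq_inv_of_mul_eq_one_left (by rw [mul_comm] at h1; exact h1))

end Groupy
section CharSum
variable {F : Type} [Field F] [Fintype F] [DecidableEq F] {n : ℕ}
variable (ψ : AddChar F ℂ) (μ : List ℕ)

/-- The subgroup `K_v = {u ∈ U : v⁻¹ u v ∈ U}`, as a finset. -/
noncomputable def Kset (v : GL (Fin n) F) : Finset (GL (Fin n) F) :=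
  (Uset F n).filter fun k => IsUU (((v⁻¹ * k * v : GL (Fin n) F)) : Matrix (Fin n) (Fin n) F)

lemma mem_Kset {v k : GL (Fin n) F} :
    k ∈ Kset v ↔ IsUU (k : Matrix (Fin n) (Fin n) F) ∧
      IsUU (((v⁻¹ * k * v : GL (Fin n) F)) : Matrix (Fin n) (Fin n) F) := by
  simp [Kset, mem_Uset, Finset.mem_filter]

lemma one_mem_Kset (v : GL (Fin n) F) : (1 : GL (Fin n) F) ∈ Kset v := by
  rw [mem_Kset]
  constructor
  · rw [Units.val_one]; exact isUU_one
  · have : v⁻¹ * 1 * v = (1 : GL (Fin n) F) := by group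
    rw [this, Units.val_one]; exact isUU_one

lemma mul_mem_Kset {v k k' : GL (Fin n) F} (hk : k ∈ Kset v) (hk' : k' ∈ Kset v) :
    k * k' ∈ Kset v := by
  rw [mem_Kset] at *
  refine ⟨by rw [Units.val_mul]; exact isUU_mul hk.1 hk'.1, ?_⟩
  have : v⁻¹ * (k * k') * v = (v⁻¹ * k * v) * (v⁻¹ * k' * v) := by group
  rw [this, Units.val_mul]
  exact isUU_mul hk.2 hk'.2

lemma pow_mem_Kset {v k : GL (Fin n) F} (hk : k ∈ Kset v) (m : ℕ) : k ^ m ∈ Kset v := by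
  induction m with
  | zero => simpa using one_mem_Kset v
  | succ j ih => rw [pow_succ]; exact mul_mem_Kset ih hk

lemma inv_mem_Kset {v k : GL (Fin n) F} (hk : k ∈ Kset v) : k⁻¹ ∈ Kset v := by
  have hord : 0 < orderOf k := orderOf_pos k
  have h1 : k * k ^ (orderOf k - 1) = 1 := by
    rw [← pow_succ', Nat.sub_add_cancel hord, pow_orderOf_eq_one]
  rw [inv_eq_of_mul_eq_one_right h1]
  exact pow_mem_Kset hk _

/-- The character sum `S_v = Σ_{k ∈ K_v} ψ_μ(k⁻¹) ψ_μ(v⁻¹ k v)`. -/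
noncomputable def Sval (v : GL (Fin n) F) : ℂ :=
  ∑ k ∈ Kset v, psiMu ψ n μ k⁻¹ * psiMu ψ n μ (v⁻¹ * k * v)

lemma Sval_of_cond {v : GL (Fin n) F}
    (hc : ∀ u : GL (Fin n) F, IsUU (u : Matrix (Fin n) (Fin n) F) →
      IsUU ((v * u * v⁻¹ : GL (Fin n) F) : Matrix (Fin n) (Fin n) F) →
      psiMu ψ n μ u = psiMu ψ n μ (v * u * v⁻¹)) :
    Sval ψ μ v = ((Kset v).card : ℂ) := by
  unfold Sval
  rw [Finset.sum_congr rfl (fun k hk => ?_), Finset.sum_const, nsmul_eq_mul, mul_one]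
  rw [mem_Kset] at hk
  have hvk : v * (v⁻¹ * k * v) * v⁻¹ = k := by group
  have h1 := hc (v⁻¹ * k * v) hk.2 (by rw [hvk]; exact hk.1)
  rw [hvk] at h1
  rw [h1, psiMu_inv ψ μ hk.1]
  rw [inv_mul_cancel₀ (psiMu_ne_zero ψ μ k)]

lemma Sval_of_not_cond {v : GL (Fin n) F}
    (hc : ∃ u : GL (Fin n) F, IsUU (u : Matrix (Fin n) (Fin n) F) ∧
      IsUU ((v * u * v⁻¹ : GL (Fin n) F) : Matrix (Fin n) (Fin n) F) ∧
      psiMu ψ n μ u ≠ psiMu ψ n μ (v * u * v⁻¹)) :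
    Sval ψ μ v = 0 := by
  obtain ⟨u, hu, hvu, hne⟩ := hc
  set φ : GL (Fin n) F → ℂ := fun k => psiMu ψ n μ k⁻¹ * psiMu ψ n μ (v⁻¹ * k * v) with hφ
  set k0 : GL (Fin n) F := v * u * v⁻¹ with hk0
  have hk0mem : k0 ∈ Kset v := by
    rw [mem_Kset]
    refine ⟨hvu, ?_⟩
    have : v⁻¹ * k0 * v = u := by rw [hk0]; group
    rw [this]; exact hu
  have hmemK : ∀ k ∈ Kset v, IsUU (k : Matrix (Fin n) (Fin n) F) := fun k hk =>
    (mem_Kset.mp hk).1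
  have hφmul : ∀ k ∈ Kset v, ∀ k' ∈ Kset v, φ (k * k') = φ k * φ k' := by
    intro k hk k' hk'
    rw [mem_Kset] at hk hk'
    have e1 : (k * k')⁻¹ = k'⁻¹ * k⁻¹ := mul_inv_rev k k'
    have e2 : v⁻¹ * (k * k') * v = (v⁻¹ * k * v) * (v⁻¹ * k' * v) := by group
    rw [hφ]
    simp only []
    rw [e1, e2, psiMu_mul ψ μ (isUU_inv hk'.1) (isUU_inv hk.1),
      psiMu_mul ψ μ hk.2 hk'.2]
    ring
  have hφk0 : φ k0 ≠ 1 := by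
    intro h1
    apply hne
    have hvk : v⁻¹ * k0 * v = u := by rw [hk0]; group
    rw [hφ] at h1
    simp only [] at h1
    rw [hvk, psiMu_inv ψ μ hvu] at h1
    have := congrArg (fun z => psiMu ψ n μ k0 * z) h1
    simp only [mul_one] at this
    rw [← mul_assoc, mul_inv_cancel₀ (psiMu_ne_zero ψ μ k0), one_mul] at this
    exact this
  -- reindexing : sum over Kset v is invariant under left translation by k0
  have hre : ∑ k ∈ Kset v, φ k = ∑ k ∈ Kset v, φ (k0 * k) := by
    apply Finset.sum_nbij' (fun k => k0⁻¹ * k) (fun k => k0 * k)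
    · intro a ha
      exact mul_mem_Kset (inv_mem_Kset hk0mem) ha
    · intro a ha
      exact mul_mem_Kset hk0mem ha
    · intro a _; group
    · intro a _; group
    · intro a _
      congr 1
      group
  have hre2 : ∑ k ∈ Kset v, φ (k0 * k) = φ k0 * ∑ k ∈ Kset v, φ k := by
    rw [Finset.mul_sum]
    exact Finset.sum_congr rfl fun k hk => hφmul k0 hk0mem k hk
  have : Sval ψ μ v = φ k0 * Sval ψ μ v := by
    have hS : Sval ψ μ v = ∑ k ∈ Kset v, φ k := rfl
    rw [hS]
    rw [hre] at *
    exact hre2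
  have h2 : (1 - φ k0) * Sval ψ μ v = 0 := by
    rw [sub_mul, one_mul]
    exact sub_eq_zero_of_eq this
  rcases mul_eq_zero.mp h2 with h | h
  · exact absurd (sub_eq_zero.mp h).symm hφk0
  · exact h

lemma Sval_ne_zero_of_cond {v : GL (Fin n) F}
    (hc : ∀ u : GL (Fin n) F, IsUU (u : Matrix (Fin n) (Fin n) F) →
      IsUU ((v * u * v⁻¹ : GL (Fin n) F) : Matrix (Fin n) (Fin n) F) →
      psiMu ψ n μ u = psiMu ψ n μ (v * u * v⁻¹)) :
    Sval ψ μ v ≠ 0 := by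
  rw [Sval_of_cond ψ μ hc]
  exact Nat.cast_ne_zero.mpr (Finset.card_pos.mpr ⟨1, one_mem_Kset v⟩).ne'

end CharSum
section Talg
variable {F : Type} [Field F] [Fintype F] [DecidableEq F] {n : ℕ}
variable (ψ : AddChar F ℂ) (μ : List ℕ)

lemma T_expand (g : GL (Fin n) F) :
    eMu ψ n μ * MonoidAlgebra.single g 1 * eMu ψ n μ =
    (((Uset F n).card : ℂ)⁻¹ * ((Uset F n).card : ℂ)⁻¹) •
      ∑ u1 ∈ Uset F n, ∑ u2 ∈ Uset F n,
        MonoidAlgebra.single (u1 * g * u2) (psiMu ψ n μ u1⁻¹ * psiMu ψ n μ u2⁻¹) := by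
  unfold eMu
  rw [smul_mul_assoc, smul_mul_assoc, mul_smul_comm, ← mul_smul]
  congr 1
  rw [Finset.sum_mul, Finset.sum_mul]
  refine Finset.sum_congr rfl fun u1 _ => ?_
  rw [MonoidAlgebra.single_mul_single, mul_one, Finset.mul_sum]
  refine Finset.sum_congr rfl fun u2 _ => ?_
  rw [MonoidAlgebra.single_mul_single]

lemma T_apply (g x : GL (Fin n) F) :
    ((eMu ψ n μ * MonoidAlgebra.single g 1 * eMu ψ n μ :
        MonoidAlgebra ℂ (GL (Fin n) F))).coeff x =
    (((Uset F n).card : ℂ)⁻¹ * ((Uset F n).card : ℂ)⁻¹) *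
      ∑ u1 ∈ Uset F n, ∑ u2 ∈ Uset F n,
        (if u1 * g * u2 = x then psiMu ψ n μ u1⁻¹ * psiMu ψ n μ u2⁻¹ else 0) := by
  classical
  rw [T_expand]
  rw [MonoidAlgebra.coeff_smul_apply, smul_eq_mul]
  congr 1
  rw [MonoidAlgebra.coeff_sum, Finset.sum_apply']
  refine Finset.sum_congr rfl fun u1 _ => ?_
  rw [MonoidAlgebra.coeff_sum, Finset.sum_apply']
  refine Finset.sum_congr rfl fun u2 _ => ?_
  by_cases h : u1 * g * u2 = x
  · rw [if_pos h, ← h, MonoidAlgebra.coeff_single, Finsupp.single_eq_same]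
  · rw [if_neg h, MonoidAlgebra.coeff_single, Finsupp.single_eq_of_ne' h]

lemma fiber_sum (v x a b : GL (Fin n) F) (ha : a ∈ Uset F n) (hb : b ∈ Uset F n)
    (hx : a * v * b = x) :
    (∑ u1 ∈ Uset F n, ∑ u2 ∈ Uset F n,
        (if u1 * v * u2 = x then psiMu ψ n μ u1⁻¹ * psiMu ψ n μ u2⁻¹ else 0)) =
    psiMu ψ n μ a⁻¹ * psiMu ψ n μ b⁻¹ * Sval ψ μ v := by
  classical
  have hamem : IsUU ((a : Matrix (Fin n) (Fin n) F)) := mem_Uset.mp ha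
  have hbmem : IsUU ((b : Matrix (Fin n) (Fin n) F)) := mem_Uset.mp hb
  rw [← Finset.sum_product']
  rw [← Finset.sum_filter]
  rw [Sval, Finset.mul_sum]
  symm
  apply Finset.sum_nbij' (fun k => ((a * k, v⁻¹ * k⁻¹ * v * b) : GL (Fin n) F × GL (Fin n) F))
    (fun p => a⁻¹ * p.1)
  · intro k hk
    rw [mem_Kset] at hk
    have hkinv : k⁻¹ ∈ Kset v := inv_mem_Kset (mem_Kset.mpr hk)
    rw [mem_Kset] at hkinv
    simp only [Finset.mem_filter, Finset.mem_product]
    refine ⟨⟨mul_mem_Uset ha (mem_Uset.mpr hk.1),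
      mul_mem_Uset (mem_Uset.mpr hkinv.2) hb⟩, ?_⟩
    show (a * k) * v * (v⁻¹ * k⁻¹ * v * b) = x
    rw [← hx]; group
  · intro p hp
    simp only [Finset.mem_filter, Finset.mem_product] at hp
    obtain ⟨⟨h1, h2⟩, h3⟩ := hp
    rw [mem_Kset]
    refine ⟨?_, ?_⟩
    · have := mul_mem_Uset (inv_mem_Uset ha) h1
      exact mem_Uset.mp this
    · have he : v⁻¹ * (a⁻¹ * p.1) * v = b * p.2⁻¹ := by
        have : p.1 * v * p.2 = a * v * b := by rw [h3, hx]
        calc v⁻¹ * (a⁻¹ * p.1) * v = v⁻¹ * a⁻¹ * (p.1 * v * p.2) * p.2⁻¹ := by group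
        _ = v⁻¹ * a⁻¹ * (a * v * b) * p.2⁻¹ := by rw [this]
        _ = b * p.2⁻¹ := by group
      rw [he, Units.val_mul]
      exact isUU_mul (mem_Uset.mp hb) (mem_Uset.mp (inv_mem_Uset h2))
  · intro k _
    group
  · intro p hp
    simp only [Finset.mem_filter, Finset.mem_product] at hp
    obtain ⟨⟨h1, h2⟩, h3⟩ := hp
    have : p.1 * v * p.2 = a * v * b := by rw [h3, hx]
    have h4 : v⁻¹ * (a⁻¹ * p.1)⁻¹ * v * b = p.2 := by
      have e : v⁻¹ * (a⁻¹ * p.1)⁻¹ * v * b = v⁻¹ * p.1⁻¹ * (a * v * b) := by group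
      rw [e, ← this]
      group
    have h5 : a * (a⁻¹ * p.1) = p.1 := by group
    rw [h5, h4]
  · intro k hk
    rw [mem_Kset] at hk
    have hkiU : IsUU (((k⁻¹ : GL (Fin n) F)) : Matrix (Fin n) (Fin n) F) := isUU_inv hk.1
    have hvkvU : IsUU (((v⁻¹ * k * v : GL (Fin n) F)) : Matrix (Fin n) (Fin n) F) := hk.2
    have e1 : (a * k)⁻¹ = k⁻¹ * a⁻¹ := by group
    have e2 : (v⁻¹ * k⁻¹ * v * b)⁻¹ = b⁻¹ * (v⁻¹ * k * v) := by group
    rw [e1, e2, psiMu_mul ψ μ hkiU (isUU_inv hamem),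
      psiMu_mul ψ μ (isUU_inv hbmem) hvkvU]
    ring

end Talg
section Tfacts
variable {F : Type} [Field F] [Fintype F] [DecidableEq F] {n : ℕ}
variable (ψ : AddChar F ℂ) (μ : List ℕ)

lemma T_apply_self (v : GL (Fin n) F) :
    ((eMu ψ n μ * MonoidAlgebra.single v 1 * eMu ψ n μ :
        MonoidAlgebra ℂ (GL (Fin n) F))).coeff v =
    (((Uset F n).card : ℂ)⁻¹ * ((Uset F n).card : ℂ)⁻¹) * Sval ψ μ v := by
  rw [T_apply]
  rw [fiber_sum ψ μ v v 1 1 one_mem_Uset one_mem_Uset (by group)]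
  rw [inv_one, psiMu_one, one_mul, one_mul]

lemma T_eq_zero_of_Sval {v : GL (Fin n) F} (hS : Sval ψ μ v = 0) :
    eMu ψ n μ * MonoidAlgebra.single v 1 * eMu ψ n μ = 0 := by
  classical
  ext x
  rw [T_apply]
  by_cases h : ∃ a ∈ Uset F n, ∃ b ∈ Uset F n, a * v * b = x
  · obtain ⟨a, ha, b, hb, hab⟩ := h
    rw [fiber_sum ψ μ v x a b ha hb hab, hS, mul_zero, mul_zero]
    rfl
  · push_neg at h
    have : (∑ u1 ∈ Uset F n, ∑ u2 ∈ Uset F n,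
        (if u1 * v * u2 = x then psiMu ψ n μ u1⁻¹ * psiMu ψ n μ u2⁻¹ else 0)) = 0 := by
      apply Finset.sum_eq_zero
      intro u1 hu1
      apply Finset.sum_eq_zero
      intro u2 hu2
      rw [if_neg (h u1 hu1 u2 hu2)]
    rw [this, mul_zero]
    rfl

lemma T_ne_zero_of_mem {v : GL (Fin n) F} (hv : v ∈ Nmu ψ n μ) :
    eMu ψ n μ * MonoidAlgebra.single v 1 * eMu ψ n μ ≠ 0 := by
  intro h0
  have h1 := T_apply_self ψ μ v
  rw [h0] at h1
  have h2 : (0 : ℂ) = (((Uset F n).card : ℂ)⁻¹ * ((Uset F n).card : ℂ)⁻¹) * Sval ψ μ v := h1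
  have hS : Sval ψ μ v ≠ 0 := Sval_ne_zero_of_cond ψ μ hv.2
  have hc : ((Uset F n).card : ℂ)⁻¹ ≠ 0 := inv_ne_zero Uset_card_ne_zero
  exact (mul_ne_zero (mul_ne_zero hc hc) hS) h2.symm

lemma mem_Nmu_of_T_ne_zero {v : GL (Fin n) F}
    (hm : IsMonomialMat (v : Matrix (Fin n) (Fin n) F))
    (hT : eMu ψ n μ * MonoidAlgebra.single v 1 * eMu ψ n μ ≠ 0) :
    v ∈ Nmu ψ n μ := by
  refine ⟨hm, ?_⟩
  by_contra hc
  push_neg at hc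
  exact hT (T_eq_zero_of_Sval ψ μ (Sval_of_not_cond ψ μ
    (by obtain ⟨u, h1, h2, h3⟩ := hc; exact ⟨u, h1, h2, h3⟩)))

lemma eMu_mul_single (a : GL (Fin n) F) (ha : a ∈ Uset F n) :
    eMu ψ n μ * MonoidAlgebra.single a 1 = psiMu ψ n μ a • eMu ψ n μ := by
  unfold eMu
  rw [smul_mul_assoc, smul_comm]
  congr 1
  rw [Finset.sum_mul, Finset.smul_sum]
  apply Finset.sum_nbij' (fun u => u * a) (fun w => w * a⁻¹)
  · intro u hu; exact mul_mem_Uset hu ha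
  · intro w hw; exact mul_mem_Uset hw (inv_mem_Uset ha)
  · intro u _; group
  · intro w _; group
  · intro u hu
    rw [MonoidAlgebra.single_mul_single, mul_one, MonoidAlgebra.smul_single, smul_eq_mul]
    congr 1
    have e : (u * a)⁻¹ = a⁻¹ * u⁻¹ := by group
    rw [e, psiMu_mul ψ μ (isUU_inv (mem_Uset.mp ha)) (isUU_inv (mem_Uset.mp hu)),
      psiMu_inv ψ μ (mem_Uset.mp ha), ← mul_assoc,
      mul_inv_cancel₀ (psiMu_ne_zero ψ μ a), one_mul]

lemma single_mul_eMu (b : GL (Fin n) F) (hb : b ∈ Uset F n) :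
    MonoidAlgebra.single b 1 * eMu ψ n μ = psiMu ψ n μ b • eMu ψ n μ := by
  unfold eMu
  rw [mul_smul_comm, smul_comm]
  congr 1
  rw [Finset.mul_sum, Finset.smul_sum]
  apply Finset.sum_nbij' (fun u => b * u) (fun w => b⁻¹ * w)
  · intro u hu; exact mul_mem_Uset hb hu
  · intro w hw; exact mul_mem_Uset (inv_mem_Uset hb) hw
  · intro u _; group
  · intro w _; group
  · intro u hu
    rw [MonoidAlgebra.single_mul_single, one_mul, MonoidAlgebra.smul_single, smul_eq_mul]
    congr 1
    have e : (b * u)⁻¹ = u⁻¹ * b⁻¹ := by group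
    rw [e, psiMu_mul ψ μ (isUU_inv (mem_Uset.mp hu)) (isUU_inv (mem_Uset.mp hb)),
      psiMu_inv ψ μ (mem_Uset.mp hb)]
    rw [mul_comm (psiMu ψ n μ u⁻¹) _, ← mul_assoc,
      mul_inv_cancel₀ (psiMu_ne_zero ψ μ b), one_mul]

end Tfacts
section Unique
variable {F : Type} [Field F] {n : ℕ}

lemma IsMonomialMat.exists_fun {V : Matrix (Fin n) (Fin n) F} (h : IsMonomialMat V) :
    ∃ f : Fin n → Fin n, Function.Injective f ∧ (∀ i, V i (f i) ≠ 0) ∧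
      (∀ i j, V i j ≠ 0 → j = f i) := by
  choose f h1 h2 using h.1
  refine ⟨f, ?_, h1, h2⟩
  intro i i' hii
  have := h.2 (f i)
  exact this.unique (h1 i) (by rw [hii]; exact h1 i')

lemma bruhat_unique {u1 u2 v g : Matrix (Fin n) (Fin n) F}
    (h1 : IsUU u1) (h2 : IsUU u2) (hv : IsMonomialMat v) (hg : IsMonomialMat g)
    (he : u1 * v * u2 = g) : g = v := by
  classical
  obtain ⟨f, finj, hf1, hf2⟩ := hv.exists_fun
  obtain ⟨f', f'inj, hf1', hf2'⟩ := hg.exists_fun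
  -- entry formula
  have hentry : ∀ i j, g i j = ∑ k, u1 i k * (v k (f k) * u2 (f k) j) := by
    intro i j
    rw [← he, Matrix.mul_assoc, Matrix.mul_apply]
    refine Finset.sum_congr rfl fun k _ => ?_
    congr 1
    rw [Matrix.mul_apply, Finset.sum_eq_single (f k)]
    · intro l _ hl
      rw [of_not_not (fun hne => hl (hf2 k l hne)), zero_mul]
    · intro hmem; exact absurd (Finset.mem_univ _) hmem
  -- the key step
  have key : ∀ i : Fin n, ∃ k0 : Fin n, i ≤ k0 ∧ u1 i k0 ≠ 0 ∧ f' i = f k0 ∧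
      g i (f k0) = u1 i k0 * v k0 (f k0) := by
    intro i
    set S : Finset (Fin n) := Finset.univ.filter (fun k => u1 i k ≠ 0) with hSdef
    have hiS : i ∈ S := by
      simp only [hSdef, Finset.mem_filter, Finset.mem_univ, true_and]
      rw [h1.2]; exact one_ne_zero
    have hSsub : ∀ k ∈ S, i ≤ k := by
      intro k hk
      simp only [hSdef, Finset.mem_filter, Finset.mem_univ, true_and] at hk
      by_contra hik
      exact hk (h1.1 i k (lt_of_not_ge hik))
    have hTne : (S.image f).Nonempty := ⟨f i, Finset.mem_image_of_mem f hiS⟩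
    set j0 := (S.image f).min' hTne with hj0
    have hj0mem : j0 ∈ S.image f := (S.image f).min'_mem hTne
    obtain ⟨k0, hk0S, hk0f⟩ := Finset.mem_image.mp hj0mem
    have hval : g i j0 = u1 i k0 * v k0 (f k0) := by
      rw [hentry i j0, Finset.sum_eq_single k0]
      · rw [hk0f, h2.2, mul_one]
      · intro k _ hk
        by_cases hu : u1 i k = 0
        · rw [hu, zero_mul]
        · have hkS : k ∈ S := by
            simp only [hSdef, Finset.mem_filter, Finset.mem_univ, true_and]; exact hu
          have hle : j0 ≤ f k := (S.image f).min'_le _ (Finset.mem_image_of_mem f hkS)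
          have hlt : j0 < f k := by
            rcases lt_or_eq_of_le hle with h | h
            · exact h
            · exact absurd (finj (hk0f.trans h)).symm hk
          rw [h2.1 (f k) j0 hlt, mul_zero, mul_zero]
      · intro hmem; exact absurd (Finset.mem_univ _) hmem
    have hne : g i j0 ≠ 0 := by
      rw [hval]
      have hu : u1 i k0 ≠ 0 := by
        have := hk0S
        simp only [hSdef, Finset.mem_filter, Finset.mem_univ, true_and] at this
        exact this
      exact mul_ne_zero hu (hf1 k0)
    have hf'i : f' i = j0 := (hf2' i j0 hne).symm
    exact ⟨k0, hSsub k0 hk0S, by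
      have := hk0S
      simp only [hSdef, Finset.mem_filter, Finset.mem_univ, true_and] at this
      exact this, by rw [hf'i, hk0f], by rw [← hk0f] at hval; exact hval⟩
  -- downward induction
  have main : ∀ m : ℕ, ∀ i : Fin n, n - (i : ℕ) ≤ m →
      f' i = f i ∧ g i (f i) = v i (f i) := by
    intro m
    induction m with
    | zero => intro i hi; exact absurd hi (by have := i.isLt; omega)
    | succ m ih =>
      intro i hi
      obtain ⟨k0, hik0, hu, hfk0, hval⟩ := key i
      by_cases hk : k0 = i
      · subst hk
        exact ⟨hfk0, by rw [hval, h1.2, one_mul]⟩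
      · have hlt : i < k0 := lt_of_le_of_ne hik0 (Ne.symm hk)
        have hk0m : n - (k0 : ℕ) ≤ m := by
          have h1 := Fin.lt_def.mp hlt
          have h2 := k0.isLt
          omega
        obtain ⟨hfk0', _⟩ := ih k0 hk0m
        exfalso
        apply hk
        apply f'inj
        rw [hfk0', hfk0]
  have hff' : ∀ i, f' i = f i ∧ g i (f i) = v i (f i) := fun i => main n i (by omega)
  ext i j
  by_cases hj : j = f i
  · subst hj; exact (hff' i).2
  · have hg0 : g i j = 0 := by
      by_contra hne
      exact hj (by rw [hf2' i j hne, (hff' i).1])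
    have hv0 : v i j = 0 := by
      by_contra hne
      exact hj (hf2 i j hne)
    rw [hg0, hv0]

end Unique
section Ext
variable {F : Type} [Field F] {m : ℕ}

/-- Inverse of `Fin.succAbove p` on the complement of `p`. -/
noncomputable def unembAt (p i : Fin (m + 1)) (h : i ≠ p) : Fin m :=
  (Fin.exists_succAbove_eq h).choose

lemma unembAt_spec (p i : Fin (m + 1)) (h : i ≠ p) : p.succAbove (unembAt p i h) = i :=
  (Fin.exists_succAbove_eq h).choose_spec

lemma unembAt_succAbove (p : Fin (m + 1)) (a : Fin m) (h : p.succAbove a ≠ p) :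
    unembAt p (p.succAbove a) h = a :=
  Fin.succAbove_right_injective (unembAt_spec p (p.succAbove a) h)

lemma unembAt_lt {p i j : Fin (m + 1)} (hi : i ≠ p) (hj : j ≠ p) (hij : i < j) :
    unembAt p i hi < unembAt p j hj := by
  rw [← Fin.succAbove_lt_succAbove_iff (p := p), unembAt_spec, unembAt_spec]
  exact hij

/-- Extend a matrix by an identity row/column at `Fin.last`. -/
def extR (A : Matrix (Fin m) (Fin m) F) : Matrix (Fin (m + 1)) (Fin (m + 1)) F :=
  Matrix.of fun i k =>
    if hi : i = Fin.last m then (if k = Fin.last m then 1 else 0)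
    else if hk : k = Fin.last m then 0 else A (i.castPred hi) (k.castPred hk)

/-- Extend a matrix by an identity row/column at position `p`. -/
noncomputable def extC (p : Fin (m + 1)) (B : Matrix (Fin m) (Fin m) F) :
    Matrix (Fin (m + 1)) (Fin (m + 1)) F :=
  Matrix.of fun l j =>
    if hl : l = p then (if j = p then 1 else 0)
    else if hj : j = p then 0 else B (unembAt p l hl) (unembAt p j hj)

/-- Extend a matrix by a row at `Fin.last` and a column at `p` meeting in the value `d`. -/
noncomputable def extV (p : Fin (m + 1)) (d : F) (V : Matrix (Fin m) (Fin m) F) :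
    Matrix (Fin (m + 1)) (Fin (m + 1)) F :=
  Matrix.of fun k l =>
    if hk : k = Fin.last m then (if l = p then d else 0)
    else if hl : l = p then 0 else V (k.castPred hk) (unembAt p l hl)

lemma extR_last (A : Matrix (Fin m) (Fin m) F) (k : Fin (m + 1)) :
    extR A (Fin.last m) k = if k = Fin.last m then 1 else 0 := by
  simp [extR]

lemma extR_col_last (A : Matrix (Fin m) (Fin m) F) {i : Fin (m + 1)} (hi : i ≠ Fin.last m) :
    extR A i (Fin.last m) = 0 := by
  simp [extR, hi]

lemma extR_apply (A : Matrix (Fin m) (Fin m) F) {i : Fin (m + 1)} (hi : i ≠ Fin.last m)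
    (a : Fin m) : extR A i (Fin.castSucc a) = A (i.castPred hi) a := by
  have h2 : Fin.castSucc a ≠ Fin.last m := (Fin.castSucc_lt_last a).ne
  simp [extR, hi, h2, Fin.castPred_castSucc]

lemma isUU_extR {A : Matrix (Fin m) (Fin m) F} (hA : IsUU A) : IsUU (extR A) := by
  constructor
  · intro i k hki
    by_cases hi : i = Fin.last m
    · subst hi
      rw [extR_last, if_neg (hki.ne)]
    · have hk : k ≠ Fin.last m := by
        intro hk; subst hk
        exact absurd (lt_of_lt_of_le hki (Fin.le_last i)) (lt_irrefl _)
      show (if hi : i = Fin.last m then (if k = Fin.last m then (1:F) else 0)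
        else if hk : k = Fin.last m then 0 else A (i.castPred hi) (k.castPred hk)) = 0
      rw [dif_neg hi, dif_neg hk]
      apply hA.1
      rw [Fin.lt_def] at hki ⊢
      rwa [Fin.coe_castPred, Fin.coe_castPred]
  · intro i
    by_cases hi : i = Fin.last m
    · subst hi; rw [extR_last, if_pos rfl]
    · show (if hi' : i = Fin.last m then (if i = Fin.last m then (1:F) else 0)
        else if hk : i = Fin.last m then 0 else A (i.castPred hi') (i.castPred hk)) = 1
      rw [dif_neg hi, dif_neg hi]
      exact hA.2 _

lemma extC_p_row (p : Fin (m + 1)) (B : Matrix (Fin m) (Fin m) F) (j : Fin (m + 1)) :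
    extC p B p j = if j = p then 1 else 0 := by
  simp [extC]

lemma extC_col_p (p : Fin (m + 1)) (B : Matrix (Fin m) (Fin m) F) (l : Fin (m + 1)) :
    extC p B l p = if l = p then 1 else 0 := by
  by_cases hl : l = p
  · subst hl; simp [extC]
  · simp [extC, hl]

lemma extC_apply (p : Fin (m + 1)) (B : Matrix (Fin m) (Fin m) F) {l j : Fin (m + 1)}
    (hl : l ≠ p) (hj : j ≠ p) :
    extC p B l j = B (unembAt p l hl) (unembAt p j hj) := by
  simp [extC, hl, hj]

lemma isUU_extC {p : Fin (m + 1)} {B : Matrix (Fin m) (Fin m) F} (hB : IsUU B) :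
    IsUU (extC p B) := by
  constructor
  · intro l j hjl
    by_cases hl : l = p
    · subst hl
      rw [extC_p_row, if_neg hjl.ne]
    · by_cases hj : j = p
      · subst hj
        rw [extC_col_p, if_neg hl]
      · rw [extC_apply p B hl hj]
        exact hB.1 _ _ (unembAt_lt hj hl hjl)
  · intro l
    by_cases hl : l = p
    · subst hl; rw [extC_p_row, if_pos rfl]
    · rw [extC_apply p B hl hl]
      exact hB.2 _

lemma extV_last (p : Fin (m + 1)) (d : F) (V : Matrix (Fin m) (Fin m) F) (l : Fin (m + 1)) :
    extV p d V (Fin.last m) l = if l = p then d else 0 := by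
  simp [extV]

lemma extV_col_p (p : Fin (m + 1)) (d : F) (V : Matrix (Fin m) (Fin m) F) {k : Fin (m + 1)}
    (hk : k ≠ Fin.last m) : extV p d V k p = 0 := by
  simp [extV, hk]

lemma extV_apply (p : Fin (m + 1)) (d : F) (V : Matrix (Fin m) (Fin m) F) {k l : Fin (m + 1)}
    (hk : k ≠ Fin.last m) (hl : l ≠ p) :
    extV p d V k l = V (k.castPred hk) (unembAt p l hl) := by
  simp [extV, hk, hl]

lemma isMonomial_extV {p : Fin (m + 1)} {d : F} (hd : d ≠ 0)
    {V : Matrix (Fin m) (Fin m) F} (hV : IsMonomialMat V) : IsMonomialMat (extV p d V) := by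
  obtain ⟨f, finj, hf1, hf2⟩ := hV.exists_fun
  have hfsurj : Function.Surjective f := Finite.surjective_of_injective finj
  constructor
  · intro k
    by_cases hk : k = Fin.last m
    · subst hk
      refine ⟨p, ?_, ?_⟩
      · show extV p d V (Fin.last m) p ≠ 0
        rw [extV_last, if_pos rfl]; exact hd
      · intro l hl
        by_contra hlp
        rw [extV_last, if_neg hlp] at hl
        exact hl rfl
    · refine ⟨p.succAbove (f (k.castPred hk)), ?_, ?_⟩
      · show extV p d V k (p.succAbove (f (k.castPred hk))) ≠ 0
        rw [extV_apply p d V hk (Fin.succAbove_ne p _),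
          unembAt_succAbove]
        exact hf1 _
      · intro l hl
        have hlp : l ≠ p := by
          intro h
          rw [h, extV_col_p p d V hk] at hl
          exact hl rfl
        rw [extV_apply p d V hk hlp] at hl
        have := hf2 _ _ hl
        rw [← unembAt_spec p l hlp, this]
  · intro l
    by_cases hl : l = p
    · subst hl
      refine ⟨Fin.last m- 0, ?_, ?_⟩
      · show extV l d V (Fin.last m - 0) l ≠ 0
        rw [sub_zero, extV_last, if_pos rfl]; exact hd
      · intro k hk
        rw [sub_zero]
        by_contra hkl
        rw [extV_col_p l d V hkl] at hk
        exact hk rfl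
    · obtain ⟨a, ha⟩ := hfsurj (unembAt p l hl)
      refine ⟨Fin.castSucc a, ?_, ?_⟩
      · show extV p d V (Fin.castSucc a) l ≠ 0
        rw [extV_apply p d V (Fin.castSucc_lt_last a).ne hl, Fin.castPred_castSucc, ← ha]
        exact hf1 a
      · intro k hk
        have hkl : k ≠ Fin.last m := by
          intro h; subst h
          rw [extV_last, if_neg hl] at hk
          exact hk rfl
        rw [extV_apply p d V hkl hl] at hk
        have h2 := hf2 _ _ hk
        have h3 : k.castPred hkl = a := by
          apply finj
          rw [ha]
          exact h2.symm
        have := congrArg Fin.castSucc h3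
        rwa [Fin.castSucc_castPred] at this

end Ext
section ExtProd
variable {F : Type} [Field F] [Fintype F] [DecidableEq F] {m : ℕ}

lemma ext_product (p : Fin (m + 1)) (d : F) (A B : Matrix (Fin m) (Fin m) F)
    (M2 : Matrix (Fin (m + 1)) (Fin (m + 1)) F)
    (h_last : ∀ j, M2 (Fin.last m) j = if j = p then d else 0)
    (h_colp : ∀ i, i ≠ Fin.last m → M2 i p = 0) :
    extR A * M2 * extC p B =
      extV p d (A * M2.submatrix Fin.castSucc p.succAbove * B) := by
  have hX_last : ∀ j, (extR A * M2) (Fin.last m) j = M2 (Fin.last m) j := by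
    intro j
    rw [Matrix.mul_apply, Finset.sum_eq_single (Fin.last m)]
    · rw [extR_last, if_pos rfl, one_mul]
    · intro k _ hk
      rw [extR_last, if_neg hk, zero_mul]
    · intro h; exact absurd (Finset.mem_univ _) h
  have hX_ne : ∀ (i : Fin (m + 1)) (hi : i ≠ Fin.last m) (j : Fin (m + 1)),
      (extR A * M2) i j = ∑ a : Fin m, A (i.castPred hi) a * M2 (Fin.castSucc a) j := by
    intro i hi j
    rw [Matrix.mul_apply, Fin.sum_univ_succAbove _ (Fin.last m),
      extR_col_last A hi, zero_mul, zero_add, Fin.succAbove_last]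
    exact Finset.sum_congr rfl fun a _ => by rw [extR_apply A hi a]
  ext i j
  by_cases hi : i = Fin.last m
  · subst hi
    rw [Matrix.mul_apply, Fin.sum_univ_succAbove _ p, hX_last p, h_last p, if_pos rfl,
      extC_p_row]
    have hz : ∀ b : Fin m, (extR A * M2) (Fin.last m) (p.succAbove b) *
        extC p B (p.succAbove b) j = 0 := by
      intro b
      rw [hX_last, h_last, if_neg (Fin.succAbove_ne p b), zero_mul]
    rw [Finset.sum_eq_zero (fun b _ => hz b), add_zero, extV_last]
    by_cases hj : j = p
    · rw [if_pos hj, if_pos hj, mul_one]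
    · rw [if_neg hj, if_neg hj, mul_zero]
  · have hXip : (extR A * M2) i p = 0 := by
      rw [hX_ne i hi p]
      apply Finset.sum_eq_zero
      intro a _
      rw [h_colp _ (Fin.castSucc_lt_last a).ne, mul_zero]
    rw [Matrix.mul_apply, Fin.sum_univ_succAbove _ p, hXip, zero_mul, zero_add]
    by_cases hj : j = p
    · rw [hj, extV_col_p p d _ hi]
      apply Finset.sum_eq_zero
      intro b _
      rw [extC_col_p, if_neg (Fin.succAbove_ne p b), mul_zero]
    · rw [extV_apply p d _ hi hj]
      conv_rhs => rw [Matrix.mul_apply]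
      apply Finset.sum_congr rfl
      intro b _
      rw [extC_apply p B (Fin.succAbove_ne p b) hj, unembAt_succAbove]
      congr 1
      rw [hX_ne i hi]
      conv_rhs => rw [Matrix.mul_apply]
      exact Finset.sum_congr rfl fun a _ => rfl

lemma bruhat_exists_matrix : ∀ (k : ℕ) (M : Matrix (Fin k) (Fin k) F), M.det ≠ 0 →
    ∃ A B V : Matrix (Fin k) (Fin k) F,
      IsUU A ∧ IsUU B ∧ IsMonomialMat V ∧ A * M * B = V := by
  intro k
  induction k with
  | zero =>
    intro M _
    refine ⟨1, 1, M, ?_, ?_, ?_, by rw [Matrix.one_mul, Matrix.mul_one]⟩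
    · exact ⟨fun i => i.elim0, fun i => i.elim0⟩
    · exact ⟨fun i => i.elim0, fun i => i.elim0⟩
    · exact ⟨fun i => i.elim0, fun j => j.elim0⟩
  | succ m ih =>
    intro M hdet
    classical
    set lst := Fin.last m with hlst
    -- the last row is nonzero
    have hrow : ∃ j, M lst j ≠ 0 := by
      by_contra h
      push_neg at h
      exact hdet (Matrix.det_eq_zero_of_row_eq_zero lst h)
    set jset : Finset (Fin (m + 1)) := Finset.univ.filter (fun j => M lst j ≠ 0) with hjset
    have hjne : jset.Nonempty := by
      obtain ⟨j, hj⟩ := hrow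
      exact ⟨j, by simp [hjset, hj]⟩
    set j0 := jset.min' hjne with hj0
    have hj0mem : j0 ∈ jset := jset.min'_mem hjne
    have hd : M lst j0 ≠ 0 := by
      have := hj0mem
      simp only [hjset, Finset.mem_filter, Finset.mem_univ, true_and] at this
      exact this
    set d := M lst j0 with hdd
    have hleft : ∀ j, j < j0 → M lst j = 0 := by
      intro j hj
      by_contra h
      have : j ∈ jset := by simp [hjset, h]
      exact absurd (jset.min'_le j this) (not_le.mpr hj)
    -- clear the column j0 above the last row
    set u1 : Matrix (Fin (m + 1)) (Fin (m + 1)) F :=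
      Matrix.of (fun i k => if i = k then 1 else if k = lst then -(M i j0 / d) else 0)
      with hu1
    have h_u1 : IsUU u1 := by
      constructor
      · intro i k hki
        show (if i = k then (1:F) else if k = lst then -(M i j0 / d) else 0) = 0
        rw [if_neg hki.ne', if_neg]
        intro h
        rw [h] at hki
        exact absurd (lt_of_lt_of_le hki (Fin.le_last i)) (lt_irrefl _)
      · intro i
        show (if i = i then (1:F) else _) = 1
        rw [if_pos rfl]
    set M1 := u1 * M with hM1
    have hM1row : ∀ j, M1 lst j = M lst j := by
      intro j
      rw [hM1, Matrix.mul_apply, Finset.sum_eq_single lst]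
      · show (if lst = lst then (1:F) else _) * M lst j = M lst j
        rw [if_pos rfl, one_mul]
      · intro k _ hk
        show (if lst = k then (1:F) else if k = lst then -(M lst j0 / d) else 0) * M k j = 0
        rw [if_neg (fun h => hk h.symm), if_neg hk, zero_mul]
      · intro h; exact absurd (Finset.mem_univ _) h
    have hM1col : ∀ i, i ≠ lst → M1 i j0 = 0 := by
      intro i hi
      rw [hM1, Matrix.mul_apply, ← Finset.sum_subset (Finset.subset_univ {i, lst})]
      · rw [Finset.sum_pair hi]
        show (if i = i then (1:F) else _) * M i j0 +
          (if i = lst then (1:F) else if lst = lst then -(M i j0 / d) else 0) * M lst j0 = 0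
        rw [if_pos rfl, one_mul, if_neg hi, if_pos rfl, ← hdd, neg_mul,
          div_mul_cancel₀ _ hd, add_neg_cancel]
      · intro k _ hk
        simp only [Finset.mem_insert, Finset.mem_singleton, not_or] at hk
        show (if i = k then (1:F) else if k = lst then -(M i j0 / d) else 0) * M k j0 = 0
        rw [if_neg (fun h => hk.1 h.symm), if_neg hk.2, zero_mul]
    -- clear the last row to the right of j0
    set u2 : Matrix (Fin (m + 1)) (Fin (m + 1)) F :=
      Matrix.of (fun l j => if l = j then 1 else if l = j0 then -(M1 lst j / d) else 0)
      with hu2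
    have h_u2 : IsUU u2 := by
      constructor
      · intro l j hjl
        show (if l = j then (1:F) else if l = j0 then -(M1 lst j / d) else 0) = 0
        rw [if_neg hjl.ne']
        by_cases hl : l = j0
        · rw [if_pos hl, hM1row, hleft j (hl ▸ hjl), zero_div, neg_zero]
        · rw [if_neg hl]
      · intro l
        show (if l = l then (1:F) else _) = 1
        rw [if_pos rfl]
    set M2 := M1 * u2 with hM2
    have hM2colj0 : ∀ i, M2 i j0 = M1 i j0 := by
      intro i
      rw [hM2, Matrix.mul_apply, Finset.sum_eq_single j0]
      · show M1 i j0 * (if j0 = j0 then (1:F) else _) = M1 i j0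
        rw [if_pos rfl, mul_one]
      · intro l _ hl
        show M1 i l * (if l = j0 then (1:F) else if l = j0 then -(M1 lst j0 / d) else 0) = 0
        rw [if_neg hl, if_neg hl, mul_zero]
      · intro h; exact absurd (Finset.mem_univ _) h
    have hM2last : ∀ j, M2 lst j = if j = j0 then d else 0 := by
      intro j
      by_cases hj : j = j0
      · rw [if_pos hj, hj, hM2colj0, hM1row, ← hdd]
      · rw [if_neg hj, hM2, Matrix.mul_apply,
          ← Finset.sum_subset (Finset.subset_univ {j, j0})]
        · rw [Finset.sum_pair hj]
          show M1 lst j * (if j = j then (1:F) else _) +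
            M1 lst j0 * (if j0 = j then (1:F) else if j0 = j0 then -(M1 lst j / d) else 0) = 0
          rw [if_pos rfl, mul_one, if_neg (fun h => hj h.symm), if_pos rfl, hM1row j0,
            ← hdd, mul_neg, mul_div_cancel₀ _ hd, add_neg_cancel]
        · intro l _ hl
          simp only [Finset.mem_insert, Finset.mem_singleton, not_or] at hl
          show M1 lst l * (if l = j then (1:F) else if l = j0 then -(M1 lst j / d) else 0) = 0
          rw [if_neg hl.1, if_neg hl.2, mul_zero]
    have hM2col : ∀ i, i ≠ lst → M2 i j0 = 0 := fun i hi => by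
      rw [hM2colj0, hM1col i hi]
    -- determinant bookkeeping
    have hdet1 : u1.det = 1 := by
      rw [Matrix.det_of_upperTriangular h_u1.1]
      exact Finset.prod_eq_one fun i _ => h_u1.2 i
    have hdet2 : u2.det = 1 := by
      rw [Matrix.det_of_upperTriangular h_u2.1]
      exact Finset.prod_eq_one fun i _ => h_u2.2 i
    have hdetM2 : M2.det ≠ 0 := by
      rw [hM2, Matrix.det_mul, hM1, Matrix.det_mul, hdet1, hdet2, one_mul, mul_one]
      exact hdet
    have hsubst : M2.submatrix lst.succAbove j0.succAbove =
        M2.submatrix Fin.castSucc j0.succAbove := by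
      rw [hlst, Fin.succAbove_last]
    have hdetsub : (M2.submatrix Fin.castSucc j0.succAbove).det ≠ 0 := by
      intro h0
      apply hdetM2
      rw [Matrix.det_succ_row M2 lst, Finset.sum_eq_single j0]
      · rw [hsubst, h0, mul_zero]
      · intro j _ hj
        rw [hM2last j, if_neg hj, mul_zero, zero_mul]
      · intro h; exact absurd (Finset.mem_univ _) h
    obtain ⟨A'', B'', V'', hA'', hB'', hV'', hprod⟩ :=
      ih (M2.submatrix Fin.castSucc j0.succAbove) hdetsub
    have hkey : extR A'' * M2 * extC j0 B'' =
        extV j0 d (A'' * M2.submatrix Fin.castSucc j0.succAbove * B'') :=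
      ext_product j0 d A'' B'' M2 hM2last hM2col
    refine ⟨extR A'' * u1, u2 * extC j0 B'', extV j0 d V'', isUU_mul (isUU_extR hA'') h_u1,
      isUU_mul h_u2 (isUU_extC hB''), isMonomial_extV hd hV'', ?_⟩
    rw [← hprod, ← hkey, hM2, hM1]
    noncomm_ring

end ExtProd
section Assemble
variable {F : Type} [Field F] [Fintype F] [DecidableEq F] {n : ℕ}
variable (ψ : AddChar F ℂ) (μ : List ℕ)

lemma bruhat_exists_GL (g : GL (Fin n) F) :
    ∃ a v b : GL (Fin n) F, a ∈ Uset F n ∧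
      IsMonomialMat (v : Matrix (Fin n) (Fin n) F) ∧ b ∈ Uset F n ∧ g = a * v * b := by
  have hdet : ((g : Matrix (Fin n) (Fin n) F)).det ≠ 0 :=
    ((Matrix.isUnit_iff_isUnit_det _).mp ⟨g, rfl⟩).ne_zero
  obtain ⟨A, B, V, hA, hB, hV, hABV⟩ := bruhat_exists_matrix n (g : Matrix (Fin n) (Fin n) F) hdet
  have hAdet : A.det = 1 := by
    rw [Matrix.det_of_upperTriangular hA.1]
    exact Finset.prod_eq_one fun i _ => hA.2 i
  have hBdet : B.det = 1 := by
    rw [Matrix.det_of_upperTriangular hB.1]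
    exact Finset.prod_eq_one fun i _ => hB.2 i
  have hAu : IsUnit A := (Matrix.isUnit_iff_isUnit_det A).mpr (by rw [hAdet]; exact isUnit_one)
  have hBu : IsUnit B := (Matrix.isUnit_iff_isUnit_det B).mpr (by rw [hBdet]; exact isUnit_one)
  set a : GL (Fin n) F := hAu.unit with ha
  set b : GL (Fin n) F := hBu.unit with hb
  have haval : (a : Matrix (Fin n) (Fin n) F) = A := hAu.unit_spec
  have hbval : (b : Matrix (Fin n) (Fin n) F) = B := hBu.unit_spec
  set v : GL (Fin n) F := a * g * b with hv'
  have hvval : (v : Matrix (Fin n) (Fin n) F) = V := by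
    rw [hv', Units.val_mul, Units.val_mul, haval, hbval, hABV]
  have hamem : a ∈ Uset F n := mem_Uset.mpr (by rw [haval]; exact hA)
  have hbmem : b ∈ Uset F n := mem_Uset.mpr (by rw [hbval]; exact hB)
  refine ⟨a⁻¹, v, b⁻¹, inv_mem_Uset hamem, by rw [hvval]; exact hV,
    inv_mem_Uset hbmem, ?_⟩
  rw [hv']
  group

lemma T_apply_ne_zero_imp (v x : GL (Fin n) F)
    (h : ((eMu ψ n μ * MonoidAlgebra.single v 1 * eMu ψ n μ :
        MonoidAlgebra ℂ (GL (Fin n) F))).coeff x ≠ 0) :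
    ∃ u1 ∈ Uset F n, ∃ u2 ∈ Uset F n, u1 * v * u2 = x := by
  rw [T_apply] at h
  have h2 : (∑ u1 ∈ Uset F n, ∑ u2 ∈ Uset F n,
      (if u1 * v * u2 = x then psiMu ψ n μ u1⁻¹ * psiMu ψ n μ u2⁻¹ else 0)) ≠ 0 := by
    intro h0; rw [h0, mul_zero] at h; exact h rfl
  obtain ⟨u1, hu1, h3⟩ := Finset.exists_ne_zero_of_sum_ne_zero h2
  obtain ⟨u2, hu2, h4⟩ := Finset.exists_ne_zero_of_sum_ne_zero h3
  by_cases hc : u1 * v * u2 = x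
  · exact ⟨u1, hu1, u2, hu2, hc⟩
  · rw [if_neg hc] at h4; exact absurd rfl h4

lemma T_apply_ne_of_monomial {v x : GL (Fin n) F}
    (hv : IsMonomialMat (v : Matrix (Fin n) (Fin n) F))
    (hx : IsMonomialMat (x : Matrix (Fin n) (Fin n) F)) (hne : x ≠ v) :
    ((eMu ψ n μ * MonoidAlgebra.single v 1 * eMu ψ n μ :
        MonoidAlgebra ℂ (GL (Fin n) F))).coeff x = 0 := by
  by_contra h
  obtain ⟨u1, hu1, u2, hu2, hc⟩ := T_apply_ne_zero_imp ψ μ v x h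
  apply hne
  apply Units.ext
  have hmat : (u1 : Matrix (Fin n) (Fin n) F) * v * u2 = x := by
    rw [← Units.val_mul, ← Units.val_mul, hc]
  exact bruhat_unique (mem_Uset.mp hu1) (mem_Uset.mp hu2) hv hx hmat

end Assemble
/-- For a monomial matrix `v`, `e_μ v e_μ ≠ 0` iff `v ∈ N_μ`, and the
family `(e_μ v e_μ)_{v ∈ N_μ}` is a `ℂ`-basis of `H_μ = e_μ ℂ[G] e_μ`. -/
theorem standard_basis_Hmu {F : Type} [Field F] [Fintype F] [DecidableEq F]
    (n : ℕ) (hn : 1 ≤ n) (ψ : AddChar F ℂ) (hψ : ψ ≠ 1)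
    (μ : List ℕ) (hpos : ∀ x ∈ μ, 0 < x) (hsum : μ.sum = n) :
    (∀ v : GL (Fin n) F, IsMonomialMat (v : Matrix (Fin n) (Fin n) F) →
      (eMu ψ n μ * MonoidAlgebra.single v 1 * eMu ψ n μ ≠ 0 ↔ v ∈ Nmu ψ n μ)) ∧
    LinearIndependent ℂ (fun v : ↥(Nmu ψ n μ) =>
      eMu ψ n μ * MonoidAlgebra.single (v : GL (Fin n) F) 1 * eMu ψ n μ) ∧
    Submodule.span ℂ (Set.range fun v : ↥(Nmu ψ n μ) =>
      eMu ψ n μ * MonoidAlgebra.single (v : GL (Fin n) F) 1 * eMu ψ n μ)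
      = Hsub (eMu ψ n μ) := by
  classical
  have hcne : (((Uset F n).card : ℂ))⁻¹ ≠ 0 := inv_ne_zero Uset_card_ne_zero
  have hTself_ne : ∀ v : GL (Fin n) F, v ∈ Nmu ψ n μ →
      ((eMu ψ n μ * MonoidAlgebra.single v 1 * eMu ψ n μ :
        MonoidAlgebra ℂ (GL (Fin n) F))).coeff v ≠ 0 := by
    intro v hv
    rw [T_apply_self]
    exact mul_ne_zero (mul_ne_zero hcne hcne) (Sval_ne_zero_of_cond ψ μ hv.2)
  refine ⟨?_, ?_, ?_⟩
  · intro v hm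
    exact ⟨fun hT => mem_Nmu_of_T_ne_zero ψ μ hm hT, fun hv => T_ne_zero_of_mem ψ μ hv⟩
  · rw [linearIndependent_iff']
    intro s g hsum0 i0 hi0
    have happ : ((∑ i ∈ s, g i • (eMu ψ n μ * MonoidAlgebra.single
        ((i : ↥(Nmu ψ n μ)) : GL (Fin n) F) 1 * eMu ψ n μ) :
        MonoidAlgebra ℂ (GL (Fin n) F))).coeff ((i0 : GL (Fin n) F)) = 0 := by
      rw [hsum0]; rfl
    rw [MonoidAlgebra.coeff_sum, Finset.sum_apply'] at happ
    rw [Finset.sum_eq_single_of_mem i0 hi0] at happ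
    · rw [MonoidAlgebra.coeff_smul_apply, smul_eq_mul] at happ
      rcases mul_eq_zero.mp happ with h | h
      · exact h
      · exact absurd h (hTself_ne _ i0.2)
    · intro i _ hii
      rw [MonoidAlgebra.coeff_smul_apply, smul_eq_mul]
      have hxz : ((eMu ψ n μ * MonoidAlgebra.single ((i : ↥(Nmu ψ n μ)) : GL (Fin n) F) 1 *
          eMu ψ n μ : MonoidAlgebra ℂ (GL (Fin n) F))).coeff ((i0 : GL (Fin n) F)) = 0 := by
        apply T_apply_ne_of_monomial ψ μ (i : ↥(Nmu ψ n μ)).2.1 (i0 : ↥(Nmu ψ n μ)).2.1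
        intro hvv
        exact hii (Subtype.ext hvv.symm)
      rw [hxz, mul_zero]
  · have hTmem : ∀ w : GL (Fin n) F,
        eMu ψ n μ * MonoidAlgebra.single w 1 * eMu ψ n μ ∈ Hsub (eMu ψ n μ) := by
      intro w
      refine ⟨MonoidAlgebra.single w 1, ?_⟩
      simp only [LinearMap.coe_comp, Function.comp_apply, LinearMap.mulRight_apply,
        LinearMap.mulLeft_apply]
      rw [mul_assoc]
    have hTspan : ∀ w : GL (Fin n) F,
        eMu ψ n μ * MonoidAlgebra.single w 1 * eMu ψ n μ ∈
          Submodule.span ℂ (Set.range fun v : ↥(Nmu ψ n μ) =>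
            eMu ψ n μ * MonoidAlgebra.single (v : GL (Fin n) F) 1 * eMu ψ n μ) := by
      intro w
      obtain ⟨a, v, b, ha, hv, hb, rfl⟩ := bruhat_exists_GL w
      have e1 : MonoidAlgebra.single (a * v * b) (1 : ℂ) =
          MonoidAlgebra.single a 1 * MonoidAlgebra.single v 1 * MonoidAlgebra.single b 1 := by
        rw [MonoidAlgebra.single_mul_single, MonoidAlgebra.single_mul_single, one_mul, one_mul]
      have e2 : eMu ψ n μ * MonoidAlgebra.single (a * v * b) 1 * eMu ψ n μ =
          (psiMu ψ n μ a * psiMu ψ n μ b) •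
            (eMu ψ n μ * MonoidAlgebra.single v 1 * eMu ψ n μ) := by
        rw [e1]
        have e3 : eMu ψ n μ * (MonoidAlgebra.single a 1 * MonoidAlgebra.single v 1 *
            MonoidAlgebra.single b 1) * eMu ψ n μ =
            (eMu ψ n μ * MonoidAlgebra.single a 1) * MonoidAlgebra.single v 1 *
            (MonoidAlgebra.single b 1 * eMu ψ n μ) := by noncomm_ring
        rw [e3, eMu_mul_single ψ μ a ha, single_mul_eMu ψ μ b hb,
          smul_mul_assoc, smul_mul_assoc, mul_smul_comm, smul_smul]
      rw [e2]
      by_cases hNv : v ∈ Nmu ψ n μ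
      · exact Submodule.smul_mem _ _ (Submodule.subset_span ⟨⟨v, hNv⟩, rfl⟩)
      · have hz : eMu ψ n μ * MonoidAlgebra.single v 1 * eMu ψ n μ = 0 := by
          by_contra hne
          exact hNv (mem_Nmu_of_T_ne_zero ψ μ hv hne)
        rw [hz, smul_zero]
        exact Submodule.zero_mem _
    apply le_antisymm
    · rw [Submodule.span_le]
      rintro y ⟨v, rfl⟩
      exact hTmem _
    · rintro y ⟨x, rfl⟩
      simp only [LinearMap.coe_comp, Function.comp_apply, LinearMap.mulRight_apply,
        LinearMap.mulLeft_apply]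
      rw [← mul_assoc]
      have hexp : eMu ψ n μ * x * eMu ψ n μ = ∑ g ∈ x.coeff.support,
          (x.coeff g) • (eMu ψ n μ * MonoidAlgebra.single g 1 * eMu ψ n μ) := by
        conv_lhs => rw [← MonoidAlgebra.sum_coeff_single x]
        rw [Finsupp.sum, Finset.mul_sum, Finset.sum_mul]
        refine Finset.sum_congr rfl fun g _ => ?_
        have : (MonoidAlgebra.single g (x.coeff g) : MonoidAlgebra ℂ (GL (Fin n) F)) =
            (x.coeff g) • MonoidAlgebra.single g (1 : ℂ) := by
          rw [MonoidAlgebra.smul_single', mul_one]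
        rw [this, mul_smul_comm, smul_mul_assoc]
      rw [hexp]
      exact Submodule.sum_mem _ fun g _ => Submodule.smul_mem _ _ (hTspan g)
end

section
/- There is a bijection between M_μ and the set of pairs (P, Q) of Φ-column-strict tableaux with sh(P) = sh(Q) and wt(P) = wt(Q) = μ. Equivalently, |M_μ| = Σ_λ N(λ,μ)², where the sum runs over all Φ-partitions λ and N(λ,μ) denotes the number of Φ-column-strict tableaux of shape λ and weight μ (only finitely many terms are nonzero). -/
open Matrix Polynomial

/-- `Φ` : the monic irreducible polynomials over `F` with nonzero constant term. -/
def PhiSet (F : Type) [Field F] : Type :=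
  {f : Polynomial F // f.Monic ∧ Irreducible f ∧ Polynomial.eval 0 f ≠ 0}

/-- A `Φ`-indexed family of Young diagrams, each filled by a semistandard Young tableau.
Such a family with finite support, positive entries, is a `Φ`-column-strict tableau; its
shape is the `Φ`-partition `f ↦ (T f).1`. -/
def PhiTab (F : Type) [Field F] : Type :=
  PhiSet F → Σ d : YoungDiagram, SemistandardYoungTableau d

/-- The shape of `T` is a genuine `Φ`-partition: only finitely many diagrams are nonempty. -/
def PhiTab.FinSupp {F : Type} [Field F] (T : PhiTab F) : Prop :=
  {f : PhiSet F | (T f).1 ≠ ⊥}.Finite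

/-- All entries of the filled cells are positive integers. -/
def PhiTab.PosEntries {F : Type} [Field F] (T : PhiTab F) : Prop :=
  ∀ f : PhiSet F, ∀ c ∈ (T f).1.cells, 0 < (T f).2 c.1 c.2

/-- `Φ`-column-strict tableau: column strict (built into `SemistandardYoungTableau`),
finitely supported, with positive integer entries. -/
def PhiTab.IsCS {F : Type} [Field F] (T : PhiTab F) : Prop :=
  T.FinSupp ∧ T.PosEntries

/-- The weight of a `Φ`-column-strict tableau:
`wt(T)_k = Σ_{f ∈ Φ} deg(f) · #\{entries of T^{(f)} equal to k\}`. -/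
noncomputable def PhiTab.wt {F : Type} [Field F] (T : PhiTab F) (k : ℕ) : ℕ :=
  ∑ᶠ f : PhiSet F,
    f.1.natDegree * ((T f).1.cells.filter fun c => (T f).2 c.1 c.2 = k).card

/-- The weight of `T` is the composition `μ` (entries `1,…,ℓ` have multiplicities
`μ₁,…,μ_ℓ`, all other values do not occur). -/
def PhiTab.HasWt {F : Type} [Field F] (T : PhiTab F) (μ : List ℕ) : Prop :=
  ∀ k : ℕ, T.wt (k + 1) = μ.getD k 0

/-!
Factoring every entry of a matrix `a ∈ M_μ` into elements of `Φ` turns `a` into a finitely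
supported family of `ℕ`-matrices `(A_f)_{f ∈ Φ}`, `A_f i j` being the multiplicity of `f` in
`a i j`; the degree conditions say that the `deg f`-weighted row and column sums of this family
are `μ`. The RSK correspondence is a bijection between `ℕ`-matrices and pairs `(P, Q)` of
semistandard tableaux of equal shape, under which the number of entries `k` of `P` (of `Q`) is
the `k`-th column (row) sum. Applying it to every `A_f` turns the weighted sums into the weight
of a `Φ`-tableau, and `A_f = 0` exactly when the shape is empty.

RSK is realised by Fomin's growth diagrams. A cell with matrix entry `m` and partitions
`ν`, `κ`, `ρ` at three corners determines the fourth by an invertible local rule that keeps all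
four edges horizontal strips, and `|λ| + |ν| = |κ| + |ρ| + m`. Filling an `m × n` grid row by
row, the bottom and right edges are chains of horizontal strips from `∅` to a common partition,
that is, a pair of semistandard tableaux of the same shape; invertibility of the local rule
makes this a bijection, and the size identity turns row and column sums into contents.
-/

open Finset

theorem Nat.sInf_le_iff_mem_of_isUpperSet {S : Set ℕ} (hS : IsUpperSet S) (hne : S.Nonempty)
    {k : ℕ} : sInf S ≤ k ↔ k ∈ S :=
  ⟨fun h => hS h (Nat.sInf_mem hne), fun h => Nat.sInf_le h⟩

theorem YoungDiagram.ext_rowLen {d d' : YoungDiagram} (h : ∀ i, d.rowLen i = d'.rowLen i) :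
    d = d' :=
  SetLike.ext fun c => by rw [YoungDiagram.mem_iff_lt_rowLen, YoungDiagram.mem_iff_lt_rowLen, h]

theorem YoungDiagram.card_filter_cells (d : YoungDiagram) {N : ℕ} (hN : d.rowLen N = 0)
    (p : ℕ × ℕ → Prop) [DecidablePred p] :
    #(d.cells.filter p) = ∑ i ∈ range N, #((range (d.rowLen i)).filter fun j => p (i, j)) := by
  have hrow : ∀ c ∈ d.cells.filter p, c.1 ∈ range N := fun c hc => by
    have := YoungDiagram.mem_iff_lt_rowLen.mp ((mem_filter.mp hc).1)
    have := d.rowLen_anti N c.1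
    simp only [mem_range]
    by_contra h
    omega
  rw [card_eq_sum_card_fiberwise hrow]
  refine sum_congr rfl fun i _ => card_nbij' Prod.snd (Prod.mk i) ?_ ?_ ?_ ?_
  · rintro ⟨i', j⟩ h
    simp only [coe_filter, Set.mem_ofPred_eq, mem_filter, YoungDiagram.mem_cells] at h ⊢
    obtain ⟨⟨hc, hp⟩, rfl⟩ := h
    exact ⟨mem_range.mpr (YoungDiagram.mem_iff_lt_rowLen.mp hc), hp⟩
  · intro j h
    simp only [coe_filter, Set.mem_ofPred_eq, mem_filter, mem_range,
      YoungDiagram.mem_cells] at h ⊢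
    exact ⟨⟨YoungDiagram.mem_iff_lt_rowLen.mpr h.1, h.2⟩, trivial⟩
  · rintro ⟨i', j⟩ h
    simp only [coe_filter, Set.mem_ofPred_eq] at h
    rw [← h.2]
  · intro j _
    rfl

namespace RSK

/-- Partitions are encoded by their row lengths, as antitone eventually-zero sequences.
`HStrip x y` says that `y / x` is a horizontal strip: the rows interlace,
`y (k + 1) ≤ x k ≤ y k`. -/
def HStrip (x y : ℕ → ℕ) : Prop := ∀ k, x k ≤ y k ∧ y (k + 1) ≤ x k

namespace HStrip

variable {x y : ℕ → ℕ}

theorem le (h : HStrip x y) (k : ℕ) : x k ≤ y k := (h k).1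

theorem succ_le (h : HStrip x y) (k : ℕ) : y (k + 1) ≤ x k := (h k).2

theorem antitone_left (h : HStrip x y) : Antitone x :=
  antitone_nat_of_succ_le fun k => (h.le (k + 1)).trans (h.succ_le k)

theorem zero : HStrip 0 0 := fun _ => ⟨le_rfl, le_rfl⟩

end HStrip

/-- Fomin's local rule for RSK: the partition at the corner `(i + 1, j + 1)` of a cell of the
growth diagram, from the partitions `ν`, `κ`, `ρ` at `(i, j)`, `(i, j + 1)`, `(i + 1, j)` and the
matrix entry `m` of the cell. -/
def grow (ν κ ρ : ℕ → ℕ) (m : ℕ) : ℕ → ℕ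
  | 0 => max (κ 0) (ρ 0) + m
  | k + 1 => max (κ (k + 1)) (ρ (k + 1)) + min (κ k) (ρ k) - ν k

/-- Inverse of the local rule: `shrink` recovers the corner `(i, j)` of a cell and
`shrinkEntry` its matrix entry. -/
def shrink (lam κ ρ : ℕ → ℕ) : ℕ → ℕ := fun k =>
  min (κ k) (ρ k) + max (κ (k + 1)) (ρ (k + 1)) - lam (k + 1)

def shrinkEntry (lam κ ρ : ℕ → ℕ) : ℕ := lam 0 - max (κ 0) (ρ 0)

section LocalRule

variable {ν κ ρ lam : ℕ → ℕ} {m : ℕ}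

@[simp] theorem grow_zero : grow ν κ ρ m 0 = max (κ 0) (ρ 0) + m := rfl

@[simp] theorem grow_succ (k : ℕ) :
    grow ν κ ρ m (k + 1) = max (κ (k + 1)) (ρ (k + 1)) + min (κ k) (ρ k) - ν k := rfl

theorem grow_comm : grow ν κ ρ m = grow ν ρ κ m := by
  funext k
  cases k <;> simp only [grow_zero, grow_succ, max_comm, min_comm]

theorem shrink_comm : shrink lam κ ρ = shrink lam ρ κ := by
  funext k
  simp only [shrink, max_comm, min_comm]

theorem HStrip.grow_left (h₁ : HStrip ν κ) (h₂ : HStrip ν ρ) :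
    HStrip κ (grow ν κ ρ m) := by
  intro k
  cases k with
  | zero =>
    have := h₁ 0; have := h₂ 0
    simp only [grow_zero, grow_succ]
    omega
  | succ k =>
    have := h₁ k; have := h₂ k; have := h₁ (k + 1); have := h₂ (k + 1)
    simp only [grow_succ]
    omega

theorem HStrip.grow_right (h₁ : HStrip ν κ) (h₂ : HStrip ν ρ) :
    HStrip ρ (grow ν κ ρ m) :=
  grow_comm (ν := ν) ▸ h₂.grow_left h₁

theorem shrink_grow (h₁ : HStrip ν κ) (h₂ : HStrip ν ρ) :
    shrink (grow ν κ ρ m) κ ρ = ν := by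
  funext k
  have := h₁ k; have := h₂ k
  simp only [shrink, grow_succ]
  omega

theorem shrinkEntry_grow : shrinkEntry (grow ν κ ρ m) κ ρ = m := by
  simp only [shrinkEntry, grow_zero]
  omega

theorem HStrip.shrink_left (g₁ : HStrip κ lam) (g₂ : HStrip ρ lam) :
    HStrip (shrink lam κ ρ) κ := by
  intro k
  have := g₁ k; have := g₂ k; have := g₁ (k + 1); have := g₂ (k + 1)
  simp only [shrink]
  omega

theorem HStrip.shrink_right (g₁ : HStrip κ lam) (g₂ : HStrip ρ lam) :
    HStrip (shrink lam κ ρ) ρ :=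
  shrink_comm (lam := lam) ▸ g₂.shrink_left g₁

theorem grow_shrink (g₁ : HStrip κ lam) (g₂ : HStrip ρ lam) :
    grow (shrink lam κ ρ) κ ρ (shrinkEntry lam κ ρ) = lam := by
  funext k
  cases k with
  | zero =>
    have := g₁ 0; have := g₂ 0
    simp only [grow_zero, shrinkEntry]
    omega
  | succ k =>
    have := g₁ k; have := g₂ k; have := g₁ (k + 1); have := g₂ (k + 1)
    simp only [grow_succ, shrink]
    omega

theorem grow_self_left (h : HStrip ν ρ) : grow ν ν ρ 0 = ρ := by
  funext k
  cases k with
  | zero =>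
    have := h 0
    simp only [grow_zero]
    omega
  | succ k =>
    have := h k; have := h (k + 1)
    simp only [grow_succ]
    omega

theorem grow_self_right (h : HStrip ν κ) : grow ν κ ν 0 = κ :=
  grow_comm (ν := ν) ▸ grow_self_left h

theorem sum_grow (h₁ : HStrip ν κ) (h₂ : HStrip ν ρ) (N : ℕ) :
    ∑ k ∈ range (N + 1), grow ν κ ρ m k + ∑ k ∈ range N, ν k + min (κ N) (ρ N)
      = ∑ k ∈ range (N + 1), κ k + ∑ k ∈ range (N + 1), ρ k + m := by
  induction N with
  | zero =>
    simp only [zero_add, range_one, sum_singleton, range_zero, sum_empty, grow_zero]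
    omega
  | succ N ih =>
    have := h₁ N; have := h₂ N
    have := grow_succ (ν := ν) (κ := κ) (ρ := ρ) (m := m) N
    rw [sum_range_succ _ (N + 1), sum_range_succ ν, sum_range_succ κ (N + 1),
      sum_range_succ ρ (N + 1)]
    omega

end LocalRule

def IsChainUpTo (p : ℕ → ℕ → ℕ) (n : ℕ) : Prop :=
  p 0 = 0 ∧ ∀ j < n, HStrip (p j) (p (j + 1))

def IsChain (p : ℕ → ℕ → ℕ) : Prop := p 0 = 0 ∧ ∀ j, HStrip (p j) (p (j + 1))

theorem IsChain.isChainUpTo {p : ℕ → ℕ → ℕ} (h : IsChain p) (n : ℕ) : IsChainUpTo p n :=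
  ⟨h.1, fun j _ => h.2 j⟩

theorem IsChainUpTo.mono {p : ℕ → ℕ → ℕ} {n n' : ℕ} (h : IsChainUpTo p n')
    (hn : n ≤ n') : IsChainUpTo p n :=
  ⟨h.1, fun j hj => h.2 j (hj.trans_le hn)⟩

def growRow (p : ℕ → ℕ → ℕ) (a : ℕ → ℕ) : ℕ → ℕ → ℕ
  | 0 => 0
  | j + 1 => grow (p j) (p (j + 1)) (growRow p a j) (a j)

section Row

variable {p p' q : ℕ → ℕ → ℕ} {a a' : ℕ → ℕ} {n : ℕ}

theorem growRow_succ (j : ℕ) :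
    growRow p a (j + 1) = grow (p j) (p (j + 1)) (growRow p a j) (a j) :=
  rfl

theorem growRow_congr {j : ℕ} (hp : ∀ j' ≤ j, p j' = p' j') (ha : ∀ j' < j, a j' = a' j') :
    growRow p a j = growRow p' a' j := by
  induction j with
  | zero => rfl
  | succ j ih =>
    rw [growRow_succ, growRow_succ,
      ih (fun j' _ => hp j' (by omega)) (fun j' _ => ha j' (by omega)),
      hp j (by omega), hp (j + 1) le_rfl, ha j (by omega)]

theorem IsChainUpTo.hstrip_growRow (hp : IsChainUpTo p n) :
    ∀ j ≤ n, HStrip (p j) (growRow p a j)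
  | 0, _ => by rw [hp.1]; exact HStrip.zero
  | j + 1, hj => (hp.2 j hj).grow_left (hp.hstrip_growRow j (by omega))

theorem IsChainUpTo.isChainUpTo_growRow (hp : IsChainUpTo p n) : IsChainUpTo (growRow p a) n :=
  ⟨rfl, fun j hj => (hp.2 j hj).grow_right (hp.hstrip_growRow j hj.le)⟩

theorem IsChain.hstrip_growRow (hp : IsChain p) (j : ℕ) : HStrip (p j) (growRow p a j) :=
  (hp.isChainUpTo j).hstrip_growRow j le_rfl

theorem IsChain.isChain_growRow (hp : IsChain p) : IsChain (growRow p a) :=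
  ⟨rfl, fun j => ((hp.isChainUpTo (j + 1)).isChainUpTo_growRow.2 j (Nat.lt_succ_self j))⟩

theorem growRow_inj (hp : IsChainUpTo p n) (hp' : IsChainUpTo p' n)
    (hrow : ∀ j ≤ n, growRow p a j = growRow p' a' j) (hn : p n = p' n) :
    (∀ j ≤ n, p j = p' j) ∧ (∀ j < n, a j = a' j) := by
  induction n with
  | zero => exact ⟨fun j hj => by rw [Nat.le_zero.mp hj, hp.1, hp'.1], fun j hj => by omega⟩
  | succ n ih =>
    have hlast : p n = p' n ∧ a n = a' n := by
      have h := hrow (n + 1) le_rfl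
      rw [growRow_succ, growRow_succ, hn, hrow n (by omega)] at h
      constructor
      · rw [← shrink_grow (m := a n) (hp.2 n (by omega)) (hp.hstrip_growRow n (by omega)),
          ← shrink_grow (m := a' n) (hp'.2 n (by omega)) (hp'.hstrip_growRow n (by omega)),
          hrow n (by omega), hn, h]
      · rw [← shrinkEntry_grow (ν := p n) (κ := p' (n + 1)) (ρ := growRow p' a' n) (m := a n),
          h, shrinkEntry_grow]
    obtain ⟨hps, has⟩ := ih (hp.mono (by omega)) (hp'.mono (by omega))
      (fun j hj => hrow j (by omega)) hlast.1
    refine ⟨fun j hj => ?_, fun j hj => ?_⟩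
    · obtain hj | rfl := Nat.lt_or_eq_of_le hj
      exacts [hps j (by omega), hn]
    · obtain hj | rfl := Nat.lt_succ_iff_lt_or_eq.mp hj
      exacts [has j hj, hlast.2]

theorem exists_growRow_eq (hq : IsChainUpTo q n) {t : ℕ → ℕ} (ht : HStrip t (q n)) :
    ∃ p a, IsChainUpTo p n ∧ p n = t ∧ ∀ j ≤ n, growRow p a j = q j := by
  induction n generalizing t with
  | zero =>
    refine ⟨0, 0, ⟨rfl, fun j hj => absurd hj (by omega)⟩, ?_, fun j hj => ?_⟩
    · funext k
      simpa [hq.1, eq_comm] using ht.le k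
    · rw [Nat.le_zero.mp hj, hq.1]; rfl
  | succ n ih =>
    have hqn := hq.2 n (by omega)
    obtain ⟨p, a, hp, hpn, hrow⟩ := ih (hq.mono (by omega)) (ht.shrink_right hqn)
    set p' := Function.update p (n + 1) t
    set a' := Function.update a n (shrinkEntry (q (n + 1)) t (q n))
    have hp' : ∀ j ≤ n, p' j = p j := fun j hj => by simp [p', show j ≠ n + 1 by omega]
    have hagree : ∀ j ≤ n, growRow p' a' j = q j := fun j hj =>
      (growRow_congr (fun j' hj' => hp' j' (by omega))
        (fun j' _ => by simp [a', show j' ≠ n by omega])).trans (hrow j hj)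
    refine ⟨p', a', ⟨by simp [hp' 0 (by omega), hp.1], fun j hj => ?_⟩, by simp [p'],
      fun j hj => ?_⟩
    · obtain hj | rfl := Nat.lt_succ_iff_lt_or_eq.mp hj
      · rw [hp' j (by omega), hp' (j + 1) hj]
        exact hp.2 j hj
      · rw [hp' j le_rfl, hpn]
        simpa [p'] using ht.shrink_left hqn
    · obtain hj | rfl := Nat.lt_or_eq_of_le hj
      · exact hagree j (by omega)
      · rw [growRow_succ, hagree n le_rfl, hp' n le_rfl, hpn]
        simpa [p', a'] using grow_shrink ht hqn

theorem IsChain.growRow_eq_of_le (hp : IsChain p)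
    (hps : ∀ j, n ≤ j → p j = p n) (ha : ∀ j, n ≤ j → a j = 0) :
    ∀ j, n ≤ j → growRow p a j = growRow p a n := by
  intro j hj
  induction j, hj using Nat.le_induction with
  | base => rfl
  | succ j hj ih =>
    have h := hp.hstrip_growRow (a := a) j
    rw [hps j hj] at h
    rw [growRow_succ, hps (j + 1) (by omega), hps j hj, ha j hj, grow_self_left h, ih]

theorem IsChain.growRow_zero (hp : IsChain p) : growRow p 0 = p := by
  funext j
  induction j with
  | zero => exact hp.1.symm
  | succ j ih => rw [growRow_succ, ih, Pi.zero_apply, grow_self_right (hp.2 j)]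

end Row

/-- The growth diagram of `A`: the partition at the corner `(i, j)` is the common shape of the
RSK tableaux of the submatrix of `A` on the rows `< i` and the columns `< j`. -/
def growthDiagram (A : ℕ → ℕ → ℕ) : ℕ → ℕ → ℕ → ℕ
  | 0 => 0
  | i + 1 => growRow (growthDiagram A i) (A i)

section GrowthDiagram

variable {A A' : ℕ → ℕ → ℕ}

theorem growthDiagram_succ (i : ℕ) :
    growthDiagram A (i + 1) = growRow (growthDiagram A i) (A i) :=
  rfl

theorem isChain_growthDiagram (i : ℕ) : IsChain (growthDiagram A i) := by
  induction i with
  | zero => exact ⟨rfl, fun _ => HStrip.zero⟩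
  | succ i ih => exact ih.isChain_growRow

theorem hstrip_growthDiagram_succ (i j : ℕ) :
    HStrip (growthDiagram A i j) (growthDiagram A (i + 1) j) :=
  (isChain_growthDiagram i).hstrip_growRow j

theorem growthDiagram_congr {i : ℕ} (h : ∀ i' < i, A i' = A' i') :
    growthDiagram A i = growthDiagram A' i := by
  induction i with
  | zero => rfl
  | succ i ih => rw [growthDiagram_succ, growthDiagram_succ, ih (fun i' hi' => h i' (by omega)),
      h i (by omega)]

theorem growthDiagram_eq_zero {i k : ℕ} (j : ℕ) (hik : i ≤ k) :
    growthDiagram A i j k = 0 := by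
  induction i generalizing j k with
  | zero => rfl
  | succ i ih =>
    obtain ⟨k, rfl⟩ : ∃ k', k = k' + 1 := ⟨k - 1, by omega⟩
    have := (hstrip_growthDiagram_succ (A := A) i j).succ_le k
    have := ih j (k := k) (by omega)
    omega

theorem growthDiagram_inj {n i : ℕ}
    (hbot : ∀ j ≤ n, growthDiagram A i j = growthDiagram A' i j)
    (hright : ∀ k ≤ i, growthDiagram A k n = growthDiagram A' k n) :
    ∀ i' < i, ∀ j < n, A i' j = A' i' j := by
  induction i generalizing A A' with
  | zero => intro i' hi'; omega
  | succ i ih =>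
    obtain ⟨hrow, hentry⟩ := growRow_inj ((isChain_growthDiagram i).isChainUpTo n)
      ((isChain_growthDiagram i).isChainUpTo n) hbot (hright i (by omega))
    intro i' hi'
    obtain hi' | rfl := Nat.lt_succ_iff_lt_or_eq.mp hi'
    · exact ih hrow (fun k hk => hright k (by omega)) i' hi'
    · exact hentry

theorem IsChainUpTo.le_last {q : ℕ → ℕ → ℕ} {n : ℕ} (hq : IsChainUpTo q n) :
    ∀ j ≤ n, ∀ k, q j k ≤ q n k := by
  induction n with
  | zero => intro j hj k; rw [Nat.le_zero.mp hj]
  | succ n ih =>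
    intro j hj k
    obtain hj | rfl := Nat.lt_or_eq_of_le hj
    · exact (ih (hq.mono (by omega)) j (by omega) k).trans ((hq.2 n (by omega)).le k)
    · exact le_rfl

theorem exists_growthDiagram_eq {n i : ℕ} {q r : ℕ → ℕ → ℕ} (hq : IsChainUpTo q n)
    (hr : IsChainUpTo r i) (hqr : r i = q n) :
    ∃ A : ℕ → ℕ → ℕ, (∀ i' j, i ≤ i' ∨ n ≤ j → A i' j = 0) ∧
      (∀ j ≤ n, growthDiagram A i j = q j) ∧ (∀ k ≤ i, growthDiagram A k n = r k) := by
  induction i generalizing q with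
  | zero =>
    have hq0 : ∀ j ≤ n, q j = 0 := fun j hj => by
      funext k
      have := hq.le_last j hj k
      rw [← hqr, hr.1] at this
      simpa using this
    refine ⟨0, fun _ _ _ => rfl, fun j hj => (hq0 j hj).symm, fun k hk => ?_⟩
    rw [Nat.le_zero.mp hk, hr.1]; rfl
  | succ i ih =>
    obtain ⟨p, a, hp, hpn, hrow⟩ := exists_growRow_eq hq (hqr ▸ hr.2 i (by omega))
    obtain ⟨A, hA, hAbot, hAright⟩ := ih hp (hr.mono (by omega)) hpn.symm
    set A' := Function.update A i (fun j => if j < n then a j else 0)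
    have hlow : ∀ k ≤ i, growthDiagram A' k = growthDiagram A k := fun k hk =>
      growthDiagram_congr fun i' hi' => by simp [A', show i' ≠ i by omega]
    have htop : ∀ j ≤ n, growthDiagram A' (i + 1) j = q j := fun j hj => by
      rw [growthDiagram_succ, hlow i le_rfl, ← hrow j hj]
      exact growRow_congr (fun j' hj' => hAbot j' (by omega))
        (fun j' hj' => by simp [A', show j' < n by omega])
    refine ⟨A', fun i' j h => ?_, htop, fun k hk => ?_⟩
    · by_cases hi : i' = i
      · subst hi
        simp [A', show ¬ j < n by omega]
      · simpa [A', hi] using hA i' j (by omega)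
    · obtain hk | rfl := Nat.lt_or_eq_of_le hk
      · rw [hlow k (by omega), hAright k (by omega)]
      · rw [htop n le_rfl, hqr]

theorem sum_growthDiagram_cell {N : ℕ} (i j : ℕ) (hN : i + 1 ≤ N) :
    ∑ k ∈ range N, growthDiagram A (i + 1) (j + 1) k + ∑ k ∈ range N, growthDiagram A i j k
      = ∑ k ∈ range N, growthDiagram A i (j + 1) k
        + ∑ k ∈ range N, growthDiagram A (i + 1) j k + A i j := by
  have hcell := sum_grow (m := A i j) ((isChain_growthDiagram i).2 j)
    (hstrip_growthDiagram_succ (A := A) i j) N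
  change ∑ k ∈ range (N + 1), growthDiagram A (i + 1) (j + 1) k + _ + _ = _ at hcell
  have hv : ∀ i' j', i' ≤ i + 1 → growthDiagram A i' j' N = 0 :=
    fun i' j' hi' => growthDiagram_eq_zero j' (by omega)
  rw [sum_range_succ, hv (i + 1) (j + 1) le_rfl, sum_range_succ, hv i (j + 1) (by omega),
    sum_range_succ, hv (i + 1) j le_rfl] at hcell
  simpa using hcell

theorem sum_growthDiagram_row {N : ℕ} (i : ℕ) (hN : i + 1 ≤ N) (n : ℕ) :
    ∑ k ∈ range N, growthDiagram A (i + 1) n k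
      = ∑ k ∈ range N, growthDiagram A i n k + ∑ j ∈ range n, A i j := by
  induction n with
  | zero => simp [(isChain_growthDiagram (A := A) (i + 1)).1, (isChain_growthDiagram (A := A) i).1]
  | succ n ih =>
    have := sum_growthDiagram_cell (A := A) i n hN
    rw [sum_range_succ]
    omega

theorem sum_growthDiagram_col {N : ℕ} (j : ℕ) (i : ℕ) (hN : i ≤ N) :
    ∑ k ∈ range N, growthDiagram A i (j + 1) k
      = ∑ k ∈ range N, growthDiagram A i j k + ∑ i' ∈ range i, A i' j := by
  induction i with
  | zero => rfl
  | succ i ih =>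
    have := sum_growthDiagram_cell (A := A) i j hN
    have := ih (by omega)
    rw [sum_range_succ]
    omega

end GrowthDiagram

/-- These correspond to semistandard tableaux with entries in `1, …, n`
(see `StableChain.toTableau`). -/
@[ext]
structure StableChain (n : ℕ) where
  chain : ℕ → ℕ → ℕ
  isChain : IsChain chain
  eq_last : ∀ j, n ≤ j → chain j = chain n

def zeroExtend {m n : ℕ} (A : Matrix (Fin m) (Fin n) ℕ) (i j : ℕ) : ℕ :=
  if h : i < m ∧ j < n then A ⟨i, h.1⟩ ⟨j, h.2⟩ else 0

section RSKChains

variable {m n : ℕ}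

theorem zeroExtend_of_lt (A : Matrix (Fin m) (Fin n) ℕ) {i j : ℕ} (hi : i < m) (hj : j < n) :
    zeroExtend A i j = A ⟨i, hi⟩ ⟨j, hj⟩ := by
  simp [zeroExtend, hi, hj]

theorem zeroExtend_of_le (A : Matrix (Fin m) (Fin n) ℕ) {i j : ℕ} (h : m ≤ i ∨ n ≤ j) :
    zeroExtend A i j = 0 := by
  simp only [zeroExtend]
  rw [dif_neg (by omega)]

theorem sum_range_zeroExtend_row (A : Matrix (Fin m) (Fin n) ℕ) (i : Fin m) :
    ∑ j ∈ range n, zeroExtend A i j = ∑ j, A i j := by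
  rw [← Fin.sum_univ_eq_sum_range]
  exact sum_congr rfl fun j _ => zeroExtend_of_lt A i.2 j.2

theorem sum_range_zeroExtend_col (A : Matrix (Fin m) (Fin n) ℕ) (j : Fin n) :
    ∑ i ∈ range m, zeroExtend A i j = ∑ i, A i j := by
  rw [← Fin.sum_univ_eq_sum_range]
  exact sum_congr rfl fun i _ => zeroExtend_of_lt A i.2 j.2

theorem growthDiagram_zeroExtend_of_le_col (A : Matrix (Fin m) (Fin n) ℕ) (i : ℕ) {j : ℕ}
    (hj : n ≤ j) : growthDiagram (zeroExtend A) i j = growthDiagram (zeroExtend A) i n := by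
  induction i generalizing j with
  | zero => rfl
  | succ i ih =>
    exact (isChain_growthDiagram i).growRow_eq_of_le (fun j hj => ih hj)
      (fun j hj => zeroExtend_of_le A (.inr hj)) j hj

theorem growthDiagram_zeroExtend_of_le_row (A : Matrix (Fin m) (Fin n) ℕ) {i : ℕ}
    (hi : m ≤ i) : growthDiagram (zeroExtend A) i = growthDiagram (zeroExtend A) m := by
  induction i, hi using Nat.le_induction with
  | base => rfl
  | succ i hi ih =>
    have hrow : zeroExtend A i = 0 := funext fun j => zeroExtend_of_le A (.inl hi)
    rw [growthDiagram_succ, hrow, (isChain_growthDiagram i).growRow_zero, ih]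

def rskChains (A : Matrix (Fin m) (Fin n) ℕ) : StableChain n × StableChain m :=
  (⟨fun j => growthDiagram (zeroExtend A) m j, isChain_growthDiagram m,
      fun _ hj => growthDiagram_zeroExtend_of_le_col A m hj⟩,
    ⟨fun i => growthDiagram (zeroExtend A) i n, ⟨rfl, fun i => hstrip_growthDiagram_succ i n⟩,
      fun _ hi => congrFun (growthDiagram_zeroExtend_of_le_row A hi) n⟩)

theorem rskChains_last (A : Matrix (Fin m) (Fin n) ℕ) :
    (rskChains A).1.chain n = (rskChains A).2.chain m :=
  rfl

theorem rskChains_injective : Function.Injective (rskChains (m := m) (n := n)) := by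
  intro A A' h
  have hq := congrArg (fun c => c.1.chain) h
  have hr := congrArg (fun c => c.2.chain) h
  simp only [rskChains] at hq hr
  ext i j
  simpa only [zeroExtend_of_lt _ i.2 j.2] using
    growthDiagram_inj (fun j _ => congrFun hq j) (fun k _ => congrFun hr k) i i.2 j j.2

theorem exists_rskChains_eq (q : StableChain n) (r : StableChain m) (h : q.chain n = r.chain m) :
    ∃ A : Matrix (Fin m) (Fin n) ℕ, rskChains A = (q, r) := by
  obtain ⟨B, hB, hbot, hright⟩ := exists_growthDiagram_eq (q.isChain.isChainUpTo n)
    (r.isChain.isChainUpTo m) h.symm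
  let A : Matrix (Fin m) (Fin n) ℕ := Matrix.of fun i j => B i j
  have hext : zeroExtend A = B := by
    funext i j
    by_cases h : i < m ∧ j < n
    · simp [A, zeroExtend_of_lt _ h.1 h.2]
    · rw [zeroExtend_of_le _ (by omega), hB i j (by omega)]
  refine ⟨A, Prod.ext (StableChain.ext (funext fun j => ?_))
    (StableChain.ext (funext fun i => ?_))⟩
  · show growthDiagram (zeroExtend A) m j = q.chain j
    rcases le_total j n with hj | hj
    · rw [hext, hbot j hj]
    · rw [growthDiagram_zeroExtend_of_le_col _ _ hj, hext, hbot n le_rfl, q.eq_last j hj]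
  · show growthDiagram (zeroExtend A) i n = r.chain i
    rcases le_total i m with hi | hi
    · rw [hext, hright i hi]
    · rw [growthDiagram_zeroExtend_of_le_row _ hi, hext, hright m le_rfl, r.eq_last i hi]

theorem sum_rskChains_fst_succ (A : Matrix (Fin m) (Fin n) ℕ) (j : Fin n) {N : ℕ}
    (hN : m ≤ N) :
    ∑ k ∈ range N, (rskChains A).1.chain (j + 1) k
      = ∑ k ∈ range N, (rskChains A).1.chain j k + ∑ i, A i j := by
  show ∑ k ∈ range N, growthDiagram (zeroExtend A) m (j + 1) k
    = ∑ k ∈ range N, growthDiagram (zeroExtend A) m j k + _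
  rw [sum_growthDiagram_col j m hN, sum_range_zeroExtend_col]

theorem sum_rskChains_snd_succ (A : Matrix (Fin m) (Fin n) ℕ) (i : Fin m) {N : ℕ}
    (hN : m ≤ N) :
    ∑ k ∈ range N, (rskChains A).2.chain (i + 1) k
      = ∑ k ∈ range N, (rskChains A).2.chain i k + ∑ j, A i j := by
  show ∑ k ∈ range N, growthDiagram (zeroExtend A) (i + 1) n k
    = ∑ k ∈ range N, growthDiagram (zeroExtend A) i n k + _
  rw [sum_growthDiagram_row i (by omega) n, sum_range_zeroExtend_row]

end RSKChains

def diagramOf (x : ℕ → ℕ) (hx : Antitone x) (N : ℕ) : YoungDiagram where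
  cells := (range N ×ˢ range (x 0)).filter fun c => c.2 < x c.1
  isLowerSet := by
    intro c₁ c₂ hle hmem
    simp only [coe_filter, mem_product, mem_range, Set.mem_ofPred_eq] at hmem ⊢
    have := hle.1; have := hle.2; have := hx hle.1; have := hx (Nat.zero_le c₂.1)
    omega

section Diagram

variable {x : ℕ → ℕ} {hx : Antitone x} {N : ℕ}

theorem mem_diagramOf (hN : x N = 0) {i j : ℕ} : (i, j) ∈ diagramOf x hx N ↔ j < x i := by
  rw [← YoungDiagram.mem_cells]
  simp only [diagramOf, mem_filter, mem_product, mem_range, and_iff_right_iff_imp]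
  intro h
  refine ⟨?_, h.trans_le (hx (Nat.zero_le _))⟩
  by_contra h'
  have := hx (not_lt.mp h')
  omega

theorem rowLen_diagramOf (hN : x N = 0) (i : ℕ) : (diagramOf x hx N).rowLen i = x i := by
  refine eq_of_forall_lt_iff fun j => ?_
  rw [← YoungDiagram.mem_iff_lt_rowLen, mem_diagramOf hN]

end Diagram

abbrev Tableau : Type := Σ d : YoungDiagram, SemistandardYoungTableau d

def Tableau.EntriesIn (T : Tableau) (n : ℕ) : Prop :=
  ∀ i j, (i, j) ∈ T.1 → 0 < T.2 i j ∧ T.2 i j ≤ n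

def Tableau.count (T : Tableau) (k : ℕ) : ℕ := #(T.1.cells.filter fun c => T.2 c.1 c.2 = k)

theorem Tableau.count_pos (T : Tableau) {i j : ℕ} (h : (i, j) ∈ T.1) : 0 < T.count (T.2 i j) :=
  card_pos.mpr ⟨(i, j), mem_filter.mpr ⟨h, rfl⟩⟩

theorem Tableau.count_eq_zero (T : Tableau) {n k : ℕ} (hT : T.EntriesIn n) (hk : n < k) :
    T.count k = 0 :=
  card_eq_zero.mpr <| filter_eq_empty_iff.mpr fun ⟨i, j⟩ h he => by
    have := (hT i j h).2
    simp only at he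
    omega

namespace StableChain

variable {n : ℕ} (c : StableChain n)

theorem chain_zero : c.chain 0 = 0 := c.isChain.1

theorem monotone_chain (i : ℕ) : Monotone fun k => c.chain k i :=
  monotone_nat_of_le_succ fun k => (c.isChain.2 k).le i

theorem antitone_chain (k : ℕ) : Antitone (c.chain k) := (c.isChain.2 k).antitone_left

theorem chain_le_last (k i : ℕ) : c.chain k i ≤ c.chain n i := by
  rcases le_total k n with hk | hk
  exacts [c.monotone_chain i hk, (congrFun (c.eq_last k hk) i).le]

theorem chain_eq_zero {k i : ℕ} (h : k ≤ i) : c.chain k i = 0 := by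
  induction k generalizing i with
  | zero => simp [c.chain_zero]
  | succ k ih =>
    obtain ⟨i, rfl⟩ : ∃ i', i = i' + 1 := ⟨i - 1, by omega⟩
    have := (c.isChain.2 k).succ_le i
    have := ih (i := i) (by omega)
    omega

/-- The entry of the tableau of `c` in the cell `(i, j)`: the first step at which the cell
appears. Outside the shape the set is empty and `sInf ∅ = 0`. -/
noncomputable def entry (i j : ℕ) : ℕ := sInf {k | j < c.chain k i}

theorem isUpperSet_lt_chain (i j : ℕ) : IsUpperSet {k | j < c.chain k i} :=
  fun _ _ hle h => lt_of_lt_of_le h (c.monotone_chain i hle)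

theorem entry_le_iff {i j k : ℕ} (hj : j < c.chain n i) : c.entry i j ≤ k ↔ j < c.chain k i :=
  Nat.sInf_le_iff_mem_of_isUpperSet (c.isUpperSet_lt_chain i j) ⟨n, hj⟩

theorem entry_pos {i j : ℕ} (hj : j < c.chain n i) : 0 < c.entry i j := by
  by_contra h
  have := (c.entry_le_iff hj (k := 0)).mp (by omega)
  simp [c.chain_zero] at this

theorem entry_le_last {i j : ℕ} (hj : j < c.chain n i) : c.entry i j ≤ n :=
  (c.entry_le_iff hj).mpr hj

theorem entry_of_le {i j : ℕ} (hj : c.chain n i ≤ j) : c.entry i j = 0 := by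
  have : {k | j < c.chain k i} = ∅ :=
    Set.eq_empty_of_forall_notMem fun k hk => by
      have : j < c.chain k i := hk
      have := c.chain_le_last k i
      omega
  rw [entry, this, Nat.sInf_empty]

/-- The tableau whose cells with entries `≤ k` form the partition `c.chain k`. -/
noncomputable def toTableau : Tableau :=
  ⟨diagramOf (c.chain n) (c.antitone_chain n) n,
    { entry := c.entry
      row_weak' := fun {i j₁ j₂} hj h => by
        rw [mem_diagramOf (c.chain_eq_zero le_rfl)] at h
        exact (c.entry_le_iff (by omega)).mpr
          (lt_trans hj ((c.entry_le_iff h).mp le_rfl))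
      col_strict' := fun {i₁ i₂ j} hi h => by
        rw [mem_diagramOf (c.chain_eq_zero le_rfl)] at h
        obtain ⟨e, he⟩ : ∃ e, c.entry i₂ j = e + 1 :=
          ⟨c.entry i₂ j - 1, by have := c.entry_pos h; omega⟩
        have h₂ : j < c.chain (e + 1) i₂ := he ▸ (c.entry_le_iff h).mp le_rfl
        have := c.antitone_chain (e + 1) (show i₁ + 1 ≤ i₂ from hi)
        have := (c.isChain.2 e).succ_le i₁
        have h₁ : c.entry i₁ j ≤ e := Nat.sInf_le (show j < c.chain e i₁ by omega)
        omega
      zeros' := fun {i j} h => c.entry_of_le <| by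
        rw [mem_diagramOf (c.chain_eq_zero le_rfl)] at h
        omega }⟩

theorem rowLen_toTableau (i : ℕ) : c.toTableau.1.rowLen i = c.chain n i :=
  rowLen_diagramOf (hx := c.antitone_chain n) (c.chain_eq_zero le_rfl) i

theorem mem_toTableau {i j : ℕ} : (i, j) ∈ c.toTableau.1 ↔ j < c.chain n i :=
  mem_diagramOf (hx := c.antitone_chain n) (c.chain_eq_zero le_rfl)

theorem toTableau_apply (i j : ℕ) : c.toTableau.2 i j = c.entry i j := rfl

theorem entriesIn_toTableau : c.toTableau.EntriesIn n := fun _ _ h => by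
  rw [mem_toTableau] at h
  exact ⟨c.entry_pos h, c.entry_le_last h⟩

theorem count_toTableau_succ_add_sum (k : ℕ) {N : ℕ} (hN : n ≤ N) :
    c.toTableau.count (k + 1) + ∑ i ∈ range N, c.chain k i
      = ∑ i ∈ range N, c.chain (k + 1) i := by
  rw [Tableau.count, YoungDiagram.card_filter_cells _ (N := N) (by
    rw [rowLen_toTableau]; exact c.chain_eq_zero hN), ← sum_add_distrib]
  refine sum_congr rfl fun i _ => ?_
  have hrow : (range (c.chain n i)).filter (fun j => c.toTableau.2 (i, j).1 (i, j).2 = k + 1)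
      = Ico (c.chain k i) (c.chain (k + 1) i) := by
    refine Finset.ext fun j => ?_
    rw [Finset.mem_filter, Finset.mem_range, Finset.mem_Ico, toTableau_apply]
    dsimp only
    constructor
    · rintro ⟨hj, he⟩
      refine ⟨not_lt.mp fun h => ?_, (c.entry_le_iff hj).mp he.le⟩
      have := (c.entry_le_iff hj).mpr h
      omega
    · rintro ⟨h₁, h₂⟩
      have hj := h₂.trans_le (c.chain_le_last (k + 1) i)
      refine ⟨hj, le_antisymm ((c.entry_le_iff hj).mpr h₂)
        (Nat.succ_le_of_lt (not_le.mp fun h => ?_))⟩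
      exact absurd ((c.entry_le_iff hj).mp h) (not_lt.mpr h₁)
  rw [rowLen_toTableau, hrow, Nat.card_Ico]
  have : c.chain k i ≤ c.chain (k + 1) i := c.monotone_chain i (Nat.le_succ k)
  omega

end StableChain

namespace Tableau

variable (T : Tableau) {n : ℕ}

theorem ext {T T' : Tableau} (h₁ : T.1 = T'.1) (h₂ : ∀ i j, T.2 i j = T'.2 i j) : T = T' := by
  obtain ⟨d, T⟩ := T
  obtain ⟨d', T'⟩ := T'
  subst h₁
  exact congrArg _ (SemistandardYoungTableau.ext h₂)

/-- The number of entries `≤ k` in row `i`: rows increase weakly, so this is the first column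
where the row has ended or the entries exceed `k`. -/
noncomputable def chain (k i : ℕ) : ℕ := sInf {j | T.1.rowLen i ≤ j ∨ k < T.2 i j}

theorem chain_le_iff {k i j : ℕ} : T.chain k i ≤ j ↔ T.1.rowLen i ≤ j ∨ k < T.2 i j := by
  refine Nat.sInf_le_iff_mem_of_isUpperSet (fun a b hab ha => ?_) ⟨T.1.rowLen i, .inl le_rfl⟩
  by_cases hb : T.1.rowLen i ≤ b
  · exact .inl hb
  · refine .inr (ha.resolve_left (by omega) |>.trans_le ?_)
    exact T.2.row_weak_of_le hab (YoungDiagram.mem_iff_lt_rowLen.mpr (by omega))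

theorem lt_chain_iff {k i j : ℕ} (hj : j < T.1.rowLen i) : j < T.chain k i ↔ T.2 i j ≤ k := by
  rw [← not_le, chain_le_iff]
  omega

theorem chain_le_rowLen (k i : ℕ) : T.chain k i ≤ T.1.rowLen i :=
  T.chain_le_iff.mpr (.inl le_rfl)

theorem chain_eq_rowLen (hT : T.EntriesIn n) {k : ℕ} (hk : n ≤ k) (i : ℕ) :
    T.chain k i = T.1.rowLen i := by
  refine le_antisymm (T.chain_le_rowLen k i) (not_lt.mp fun h => ?_)
  have := (T.lt_chain_iff h).not.mp (lt_irrefl _)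
  have := (hT _ _ (YoungDiagram.mem_iff_lt_rowLen.mpr h)).2
  omega

theorem isChain_chain (hT : T.EntriesIn n) : IsChain T.chain := by
  refine ⟨funext fun i => Nat.le_zero.mp (T.chain_le_iff.mpr ?_), fun k i => ⟨?_, ?_⟩⟩
  · by_cases h : T.1.rowLen i ≤ 0
    · exact .inl h
    · exact .inr (hT _ _ (YoungDiagram.mem_iff_lt_rowLen.mpr (by omega))).1
  · exact T.chain_le_iff.mpr
      ((T.chain_le_iff (k := k + 1) (i := i)).mp le_rfl |>.imp_right (by omega))
  · -- by column strictness, the entry below an entry `> k` exceeds `k + 1`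
    rw [chain_le_iff]
    by_cases h : T.1.rowLen (i + 1) ≤ T.chain k i
    · exact .inl h
    have := T.1.rowLen_anti i (i + 1) (by omega)
    have h₁ := (T.chain_le_iff (k := k) (i := i).mp le_rfl).resolve_left (by omega)
    have h₂ := T.2.col_strict (show i < i + 1 by omega)
      (YoungDiagram.mem_iff_lt_rowLen.mpr (not_le.mp h))
    exact .inr (by omega)

noncomputable def toStableChain (hT : T.EntriesIn n) : StableChain n where
  chain := T.chain
  isChain := T.isChain_chain hT
  eq_last _ hk := funext fun i => by rw [T.chain_eq_rowLen hT hk, T.chain_eq_rowLen hT le_rfl]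

theorem toTableau_toStableChain (hT : T.EntriesIn n) : (T.toStableChain hT).toTableau = T := by
  have hshape : (T.toStableChain hT).toTableau.1 = T.1 := YoungDiagram.ext_rowLen fun i => by
    rw [StableChain.rowLen_toTableau]
    exact T.chain_eq_rowLen hT le_rfl i
  refine Tableau.ext hshape fun i j => ?_
  rw [StableChain.toTableau_apply]
  by_cases hj : j < T.1.rowLen i
  · have hmem : j < T.chain (T.2 i j) i := (T.lt_chain_iff hj).mpr le_rfl
    exact le_antisymm (Nat.sInf_le hmem)
      ((T.lt_chain_iff hj).mp (Nat.sInf_mem (s := {k | j < T.chain k i}) ⟨_, hmem⟩))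
  · rw [T.2.zeros (by rwa [YoungDiagram.mem_iff_lt_rowLen])]
    exact StableChain.entry_of_le _ ((T.chain_eq_rowLen hT le_rfl i).trans_le (not_lt.mp hj))

end Tableau

theorem StableChain.chain_toTableau {n : ℕ} (c : StableChain n) :
    c.toTableau.chain = c.chain := by
  funext k i
  refine eq_of_forall_ge_iff fun j => ?_
  rw [Tableau.chain_le_iff, rowLen_toTableau, toTableau_apply]
  by_cases hj : j < c.chain n i
  · rw [← not_le, c.entry_le_iff hj]
    have := c.chain_le_last k i
    omega
  · have := c.chain_le_last k i
    omega

theorem StableChain.toTableau_injective {n : ℕ} :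
    Function.Injective (StableChain.toTableau (n := n)) := fun c c' h =>
  StableChain.ext (by rw [← c.chain_toTableau, ← c'.chain_toTableau, h])

section RSKTableau

variable {m n : ℕ}

/-- The RSK correspondence for `ℕ`-matrices: `P` records the columns and `Q` the rows of `A`. -/
noncomputable def rsk (A : Matrix (Fin m) (Fin n) ℕ) : Tableau × Tableau :=
  ((rskChains A).1.toTableau, (rskChains A).2.toTableau)

theorem rsk_fst_shape (A : Matrix (Fin m) (Fin n) ℕ) : (rsk A).1.1 = (rsk A).2.1 :=
  YoungDiagram.ext_rowLen fun i => by
    simp only [rsk, StableChain.rowLen_toTableau, rskChains_last]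

theorem entriesIn_rsk_fst (A : Matrix (Fin m) (Fin n) ℕ) : (rsk A).1.EntriesIn n :=
  StableChain.entriesIn_toTableau _

theorem entriesIn_rsk_snd (A : Matrix (Fin m) (Fin n) ℕ) : (rsk A).2.EntriesIn m :=
  StableChain.entriesIn_toTableau _

theorem rsk_injective : Function.Injective (rsk (m := m) (n := n)) := fun _ _ h =>
  rskChains_injective (Prod.ext (StableChain.toTableau_injective (congrArg Prod.fst h))
    (StableChain.toTableau_injective (congrArg Prod.snd h)))

theorem exists_rsk_eq {P Q : Tableau} (hP : P.EntriesIn n) (hQ : Q.EntriesIn m) (h : P.1 = Q.1) :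
    ∃ A : Matrix (Fin m) (Fin n) ℕ, rsk A = (P, Q) := by
  have hlast : (P.toStableChain hP).chain n = (Q.toStableChain hQ).chain m := funext fun i => by
    simp only [Tableau.toStableChain, P.chain_eq_rowLen hP le_rfl, Q.chain_eq_rowLen hQ le_rfl, h]
  obtain ⟨A, hA⟩ := exists_rskChains_eq _ _ hlast
  refine ⟨A, ?_⟩
  rw [rsk, hA, P.toTableau_toStableChain, Q.toTableau_toStableChain]

theorem count_rsk_fst (A : Matrix (Fin m) (Fin n) ℕ) (j : Fin n) :
    (rsk A).1.count (j + 1) = ∑ i, A i j := by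
  have h := (rskChains A).1.count_toTableau_succ_add_sum j (N := m + n) (by omega)
  rw [sum_rskChains_fst_succ A j (by omega)] at h
  simp only [rsk]
  omega

theorem count_rsk_snd (A : Matrix (Fin m) (Fin n) ℕ) (i : Fin m) :
    (rsk A).2.count (i + 1) = ∑ j, A i j := by
  have h := (rskChains A).2.count_toTableau_succ_add_sum i (N := m) le_rfl
  rw [sum_rskChains_snd_succ A i le_rfl] at h
  simp only [rsk]
  omega

theorem rsk_shape_eq_bot_iff (A : Matrix (Fin m) (Fin n) ℕ) : (rsk A).1.1 = ⊥ ↔ A = 0 := by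
  constructor
  · intro h
    ext i j
    have hcount := count_rsk_fst A j
    simp only [Tableau.count, h, YoungDiagram.cells_bot, filter_empty, card_empty] at hcount
    exact (sum_eq_zero_iff.mp hcount.symm) i (mem_univ i)
  · rintro rfl
    refine SetLike.ext fun ⟨i, j⟩ => iff_of_false (fun hij => ?_) (YoungDiagram.notMem_bot _)
    obtain ⟨hpos, hle⟩ := entriesIn_rsk_fst 0 i j hij
    obtain ⟨e, he⟩ : ∃ e : Fin n, (rsk 0).1.2 i j = e + 1 :=
      ⟨⟨(rsk 0).1.2 i j - 1, by omega⟩, by simp; omega⟩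
    have := (rsk 0).1.count_pos hij
    rw [he, count_rsk_fst] at this
    simp at this

end RSKTableau

end RSK

section Factorization

open UniqueFactorizationMonoid

variable {F : Type} [Field F]

theorem monic_prod_pow (S : Finset (PhiSet F)) (e : PhiSet F → ℕ) :
    (∏ f ∈ S, f.1 ^ e f).Monic :=
  monic_prod_of_monic _ _ fun f _ => f.2.1.pow _

theorem eval_zero_prod_pow_ne_zero (S : Finset (PhiSet F)) (e : PhiSet F → ℕ) :
    (∏ f ∈ S, f.1 ^ e f).eval 0 ≠ 0 := by
  rw [eval_prod]
  exact prod_ne_zero_iff.mpr fun f _ => by rw [eval_pow]; exact pow_ne_zero _ f.2.2.2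

variable [DecidableEq F]

instance : DecidableEq (PhiSet F) :=
  inferInstanceAs (DecidableEq {f : F[X] // f.Monic ∧ Irreducible f ∧ f.eval 0 ≠ 0})

theorem PhiSet.prop_of_mem_normalizedFactors {p g : F[X]} (hp : p.eval 0 ≠ 0)
    (hg : g ∈ normalizedFactors p) : g.Monic ∧ Irreducible g ∧ g.eval 0 ≠ 0 := by
  have hirr := irreducible_of_normalized_factor g hg
  refine ⟨normalize_normalized_factor g hg ▸ monic_normalize hirr.ne_zero, hirr,
    fun h => hp ?_⟩
  obtain ⟨c, rfl⟩ := dvd_of_mem_normalizedFactors hg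
  rw [eval_mul, h, zero_mul]

theorem finite_support_count_normalizedFactors (p : F[X]) :
    (Function.support fun f : PhiSet F => (normalizedFactors p).count f.1).Finite :=
  ((normalizedFactors p).toFinset.finite_toSet.preimage Subtype.val_injective.injOn).subset
    fun _ hf => Multiset.mem_toFinset.mpr (Multiset.count_ne_zero.mp hf)

theorem eq_of_count_normalizedFactors_eq {p q : F[X]} (hp : p.Monic) (hq : q.Monic)
    (hp0 : p.eval 0 ≠ 0) (hq0 : q.eval 0 ≠ 0)
    (h : ∀ f : PhiSet F, (normalizedFactors p).count f.1 = (normalizedFactors q).count f.1) :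
    p = q := by
  refine eq_of_monic_of_associated hp hq
    ((associated_iff_normalizedFactors_eq_normalizedFactors hp.ne_zero hq.ne_zero).mpr ?_)
  ext g
  by_cases hg : g ∈ normalizedFactors p ∨ g ∈ normalizedFactors q
  · obtain hg | hg := hg
    · exact h ⟨g, PhiSet.prop_of_mem_normalizedFactors hp0 hg⟩
    · exact h ⟨g, PhiSet.prop_of_mem_normalizedFactors hq0 hg⟩
  · push Not at hg
    rw [Multiset.count_eq_zero.mpr hg.1, Multiset.count_eq_zero.mpr hg.2]

theorem natDegree_eq_finsum {p : F[X]} (hp : p.Monic) (hp0 : p.eval 0 ≠ 0) :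
    p.natDegree = ∑ᶠ f : PhiSet F, f.1.natDegree * (normalizedFactors p).count f.1 := by
  classical
  set s := normalizedFactors p
  have hs : ∀ g ∈ s, g.Monic ∧ Irreducible g ∧ g.eval 0 ≠ 0 :=
    fun g hg => PhiSet.prop_of_mem_normalizedFactors hp0 hg
  have hprod : s.prod = p := eq_of_monic_of_associated
    (Multiset.prod_induction _ s (fun _ _ => Monic.mul) monic_one fun g hg => (hs g hg).1) hp
    (prod_normalizedFactors hp.ne_zero)
  -- `PhiSet F` is a plain `def`: unfold it to the subtype to sum over `Finset.subtype`
  show _ = ∑ᶠ f : {f : F[X] // f.Monic ∧ Irreducible f ∧ f.eval 0 ≠ 0},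
    f.1.natDegree * s.count f.1
  rw [finsum_eq_sum_of_support_subset (s := s.toFinset.subtype _) _ fun f hf =>
      mem_subtype.mpr (Multiset.mem_toFinset.mpr (Multiset.count_ne_zero.mp
        (right_ne_zero_of_mul hf))),
    sum_subtype_of_mem (fun g => g.natDegree * s.count g)
      fun g hg => hs g (Multiset.mem_toFinset.mp hg),
    ← hprod, natDegree_multiset_prod_of_monic _ fun g hg => (hs g hg).1, sum_multiset_map_count]
  exact sum_congr rfl fun g _ => by rw [smul_eq_mul, mul_comm]

theorem count_normalizedFactors_prod_pow (S : Finset (PhiSet F)) (e : PhiSet F → ℕ)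
    (g : PhiSet F) :
    (normalizedFactors (∏ f ∈ S, f.1 ^ e f)).count g.1 = if g ∈ S then e g else 0 := by
  induction S using Finset.induction_on with
  | empty => simp
  | insert f S hf ih =>
    rw [prod_insert hf, normalizedFactors_mul (pow_ne_zero _ f.2.1.ne_zero)
      (prod_ne_zero_iff.mpr fun f _ => pow_ne_zero _ f.2.1.ne_zero), Multiset.count_add, ih,
      f.2.2.1.normalizedFactors_pow, f.2.1.normalize_eq_self, Multiset.count_replicate]
    by_cases hgf : g = f
    · subst hgf
      simp [hf]
    · simp [hgf, mem_insert, Ne.symm (Subtype.coe_ne_coe.mpr hgf)]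

end Factorization

section Assembly

open UniqueFactorizationMonoid RSK

variable {F : Type} [Field F]

theorem PhiTab.wt_eq (T : PhiTab F) (k : ℕ) :
    T.wt k = ∑ᶠ f : PhiSet F, f.1.natDegree * Tableau.count (T f) k :=
  rfl

theorem PhiTab.wt_eq_zero {T : PhiTab F} {n k : ℕ} (hT : ∀ f, Tableau.EntriesIn (T f) n)
    (hk : n < k) : T.wt k = 0 := by
  simp [PhiTab.wt_eq, Tableau.count_eq_zero _ (hT _) hk]

/-- Entries beyond the length of `μ` would contribute to the weight, which vanishes there. -/
theorem PhiTab.entriesIn_of_hasWt {T : PhiTab F} {μ : List ℕ} (hT : T.IsCS) (hw : T.HasWt μ)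
    (f : PhiSet F) : Tableau.EntriesIn (T f) μ.length := by
  intro i j hij
  refine ⟨hT.2 f (i, j) hij, not_lt.mp fun hlt => ?_⟩
  have hsupp : (Function.support fun g : PhiSet F =>
      g.1.natDegree * Tableau.count (T g) ((T f).2 i j)).Finite :=
    hT.1.subset fun g hg hbot => hg (by simp [Tableau.count, show (T g).1 = ⊥ from hbot])
  have hle := single_le_finsum f hsupp fun _ => Nat.zero_le _
  have hpos := Nat.mul_pos f.2.2.1.natDegree_pos (Tableau.count_pos _ hij)
  have hzero := hw ((T f).2 i j - 1)
  rw [Nat.sub_add_cancel (hT.2 f (i, j) hij), List.getD_eq_default _ _ (by omega)] at hzero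
  rw [← PhiTab.wt_eq, hzero] at hle
  omega

theorem PhiTab.hasWt_iff {T : PhiTab F} {μ : List ℕ}
    (hT : ∀ f, Tableau.EntriesIn (T f) μ.length) :
    T.HasWt μ ↔ ∀ k : Fin μ.length, T.wt (k + 1) = μ.get k := by
  refine ⟨fun h k => by rw [h k, List.getD_eq_getElem _ _ k.2, List.get_eq_getElem],
    fun h k => ?_⟩
  by_cases hk : k < μ.length
  · rw [h ⟨k, hk⟩, List.getD_eq_getElem _ _ hk, List.get_eq_getElem]
  · rw [PhiTab.wt_eq_zero hT (by omega), List.getD_eq_default _ _ (by omega)]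

variable [DecidableEq F] {m n : ℕ}

noncomputable def expMatrix (a : Matrix (Fin m) (Fin n) F[X]) (f : PhiSet F) :
    Matrix (Fin m) (Fin n) ℕ :=
  Matrix.of fun i j => (normalizedFactors (a i j)).count f.1

noncomputable def rskPhi (a : Matrix (Fin m) (Fin n) F[X]) : PhiTab F × PhiTab F :=
  (fun f => (RSK.rsk (expMatrix a f)).1, fun f => (RSK.rsk (expMatrix a f)).2)

section

variable {a : Matrix (Fin m) (Fin n) F[X]}

theorem rskPhi_shape (f : PhiSet F) : ((rskPhi a).1 f).1 = ((rskPhi a).2 f).1 :=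
  RSK.rsk_fst_shape _

theorem finSupp_rskPhi_fst : (rskPhi a).1.FinSupp := by
  refine (Set.finite_iUnion fun i => Set.finite_iUnion fun j =>
    finite_support_count_normalizedFactors (a i j)).subset fun f hf => ?_
  have hne : expMatrix a f ≠ 0 := mt (RSK.rsk_shape_eq_bot_iff _).mpr hf
  obtain ⟨i, j, hij⟩ : ∃ i j, expMatrix a f i j ≠ 0 := by
    by_contra! h
    exact hne (Matrix.ext h)
  exact Set.mem_iUnion₂.mpr ⟨i, j, hij⟩

theorem isCS_rskPhi_fst : (rskPhi a).1.IsCS :=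
  ⟨finSupp_rskPhi_fst, fun _ _ hc => (RSK.entriesIn_rsk_fst _ _ _ hc).1⟩

theorem isCS_rskPhi_snd : (rskPhi a).2.IsCS := by
  refine ⟨?_, fun _ _ hc => (RSK.entriesIn_rsk_snd _ _ _ hc).1⟩
  simpa only [PhiTab.FinSupp, ← rskPhi_shape] using finSupp_rskPhi_fst (a := a)

variable (ha : ∀ i j, (a i j).Monic ∧ (a i j).eval 0 ≠ 0)
include ha

theorem wt_rskPhi_fst (j : Fin n) : (rskPhi a).1.wt (j + 1) = ∑ i, (a i j).natDegree := by
  rw [PhiTab.wt_eq]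
  simp only [rskPhi, RSK.count_rsk_fst, expMatrix, Matrix.of_apply, mul_sum]
  rw [finsum_sum_comm _ _ fun i _ => (finite_support_count_normalizedFactors (a i j)).subset
    (Function.support_mul_subset_right _ _)]
  exact sum_congr rfl fun i _ => (natDegree_eq_finsum (ha i j).1 (ha i j).2).symm

theorem wt_rskPhi_snd (i : Fin m) : (rskPhi a).2.wt (i + 1) = ∑ j, (a i j).natDegree := by
  rw [PhiTab.wt_eq]
  simp only [rskPhi, RSK.count_rsk_snd, expMatrix, Matrix.of_apply, mul_sum]
  rw [finsum_sum_comm _ _ fun j _ => (finite_support_count_normalizedFactors (a i j)).subset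
    (Function.support_mul_subset_right _ _)]
  exact sum_congr rfl fun j _ => (natDegree_eq_finsum (ha i j).1 (ha i j).2).symm

end

theorem rskPhi_inj {a a' : Matrix (Fin m) (Fin n) F[X]}
    (ha : ∀ i j, (a i j).Monic ∧ (a i j).eval 0 ≠ 0)
    (ha' : ∀ i j, (a' i j).Monic ∧ (a' i j).eval 0 ≠ 0) (h : rskPhi a = rskPhi a') :
    a = a' := by
  have hexp : ∀ f, expMatrix a f = expMatrix a' f := fun f => RSK.rsk_injective
    (Prod.ext (congrFun (congrArg Prod.fst h) f) (congrFun (congrArg Prod.snd h) f))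
  refine Matrix.ext fun i j => ?_
  exact eq_of_count_normalizedFactors_eq (ha i j).1 (ha' i j).1 (ha i j).2 (ha' i j).2
    fun f => congrFun (congrFun (hexp f) i) j

theorem exists_rskPhi_eq {P Q : PhiTab F} (hP : ∀ f, Tableau.EntriesIn (P f) n)
    (hQ : ∀ f, Tableau.EntriesIn (Q f) m) (hPQ : ∀ f, (P f).1 = (Q f).1) (hfin : P.FinSupp) :
    ∃ a : Matrix (Fin m) (Fin n) F[X],
      (∀ i j, (a i j).Monic ∧ (a i j).eval 0 ≠ 0) ∧ rskPhi a = (P, Q) := by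
  choose A hA using fun f => RSK.exists_rsk_eq (hP f) (hQ f) (hPQ f)
  have hAS : ∀ f ∉ hfin.toFinset, A f = 0 := fun f hf =>
    (RSK.rsk_shape_eq_bot_iff _).mp (by rw [hA f]; exact not_not.mp (mt hfin.mem_toFinset.mpr hf))
  let a : Matrix (Fin m) (Fin n) F[X] := Matrix.of fun i j => ∏ f ∈ hfin.toFinset, f.1 ^ A f i j
  have hexp : ∀ f, expMatrix a f = A f := fun f => by
    ext i j
    simp only [a, expMatrix, Matrix.of_apply, count_normalizedFactors_prod_pow]
    split_ifs with hf
    · rfl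
    · rw [hAS f hf, Matrix.zero_apply]
  exact ⟨a, fun i j => ⟨monic_prod_pow _ _, eval_zero_prod_pow_ne_zero _ _⟩,
    by simp only [rskPhi, hexp, hA]⟩

end Assembly

theorem mem_Mmu_iff_hasWt {F : Type} [Field F] [DecidableEq F] {μ : List ℕ}
    {a : Matrix (Fin μ.length) (Fin μ.length) F[X]}
    (ha : ∀ i j, (a i j).Monic ∧ (a i j).eval 0 ≠ 0) :
    a ∈ Mmu F μ ↔ (rskPhi a).1.HasWt μ ∧ (rskPhi a).2.HasWt μ := by
  rw [PhiTab.hasWt_iff (T := (rskPhi a).1) fun _ => RSK.entriesIn_rsk_fst _,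
    PhiTab.hasWt_iff (T := (rskPhi a).2) fun _ => RSK.entriesIn_rsk_snd _]
  simp only [wt_rskPhi_fst ha, wt_rskPhi_snd ha]
  exact ⟨fun h => ⟨h.2.2, h.2.1⟩, fun h => ⟨ha, h.2, h.1⟩⟩

theorem Mmu_equiv_pairs_general {F : Type} [Field F]
    (μ : List ℕ) :
    Nonempty (↥(Mmu F μ) ≃
      ↥{PQ : PhiTab F × PhiTab F |
          PQ.1.IsCS ∧ PQ.2.IsCS ∧ (∀ f, (PQ.1 f).1 = (PQ.2 f).1) ∧
          PQ.1.HasWt μ ∧ PQ.2.HasWt μ}) := by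
  classical
  refine ⟨Equiv.ofBijective (fun a => ⟨rskPhi a.1, isCS_rskPhi_fst, isCS_rskPhi_snd,
    rskPhi_shape, (mem_Mmu_iff_hasWt a.2.1).mp a.2⟩) ⟨fun a a' h => ?_, ?_⟩⟩
  · exact Subtype.ext (rskPhi_inj a.2.1 a'.2.1 (congrArg Subtype.val h))
  · rintro ⟨⟨P, Q⟩, hP, hQ, hPQ, hPw, hQw⟩
    obtain ⟨a, ha, haPQ⟩ := exists_rskPhi_eq (PhiTab.entriesIn_of_hasWt hP hPw)
      (PhiTab.entriesIn_of_hasWt hQ hQw) hPQ hP.1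
    exact ⟨⟨a, (mem_Mmu_iff_hasWt ha).mpr (haPQ ▸ ⟨hPw, hQw⟩)⟩, Subtype.ext haPQ⟩

/-- There is a bijection between `M_μ` and the set of pairs `(P, Q)` of
`Φ`-column-strict tableaux with the same shape and weight `μ`. -/
theorem Mmu_equiv_pairs {F : Type} [Field F] [Fintype F] [DecidableEq F]
    (n : ℕ) (hn : 1 ≤ n)
    (μ : List ℕ) (hpos : ∀ x ∈ μ, 0 < x) (hsum : μ.sum = n) :
    Nonempty (↥(Mmu F μ) ≃
      ↥{PQ : PhiTab F × PhiTab F |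
          PQ.1.IsCS ∧ PQ.2.IsCS ∧ (∀ f, (PQ.1 f).1 = (PQ.2 f).1) ∧
          PQ.1.HasWt μ ∧ PQ.2.HasWt μ}) :=
  Mmu_equiv_pairs_general μ
end
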